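/- arXiv:1207.0552 — 8 statements merged into one kernel-verified Lean document; each statement's English description precedes it below -/
import Mathlib

section
/- Let R be a projection representation of a graph G = (V,E) and let u, v be two vertices of G. If uv ∉ E, P_u intersects P_v in R, and φ_v < φ_u, then N(u) ⊆ N(v). -/
/-- A projection representation of a simple graph `G`: each vertex `u` corresponds to a
parallelogram `P_u` with lower corners `(l u, 0)`, `(r u, 0)` and upper corners
`(L u, 1)`, `(R u, 1)`; `unb` is the set of unbounded vertices (whose parallelograms are
trivial, i.e. line segments).  Slopes are compared via `φ_u < φ_v ↔ R v - r v < R u - r u`. -/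
structure ProjRep {V : Type*} (G : SimpleGraph V) where
  l : V → ℝ
  r : V → ℝ
  L : V → ℝ
  R : V → ℝ
  unb : Set V
  l_le_r : ∀ u : V, l u ≤ r u
  L_le_R : ∀ u : V, L u ≤ R u
  width_eq : ∀ u : V, r u - l u = R u - L u
  unb_trivial : ∀ u ∈ unb, l u = r u
  lower_distinct : ∀ u v : V, u ≠ v → l u ≠ l v ∧ l u ≠ r v ∧ r u ≠ l v ∧ r u ≠ r v
  upper_distinct : ∀ u v : V, u ≠ v → L u ≠ L v ∧ L u ≠ R v ∧ R u ≠ L v ∧ R u ≠ R v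
  slope_distinct : ∀ u v : V, u ≠ v → R u - r u ≠ R v - r v
  adj_bounded_bounded : ∀ u v : V, u ≠ v → u ∉ unb → v ∉ unb →
    (G.Adj u v ↔ ¬(r u < l v ∧ R u < L v) ∧ ¬(r v < l u ∧ R v < L u))
  adj_unbounded_bounded : ∀ u ∈ unb, ∀ v ∉ unb,
    (G.Adj u v ↔
      (¬(r u < l v ∧ R u < L v) ∧ ¬(r v < l u ∧ R v < L u)) ∧ R v - r v < R u - r u)
  adj_unbounded_unbounded : ∀ u ∈ unb, ∀ v ∈ unb, ¬ G.Adj u v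

namespace ProjRep

variable {V : Type*} {G : SimpleGraph V}

/-- `P_u ≪_R P_v` : the parallelogram of `u` lies completely to the left of that of `v`. -/
def ll (ρ : ProjRep G) (u v : V) : Prop :=
  ρ.r u < ρ.l v ∧ ρ.R u < ρ.L v

/-- `P_u` intersects `P_v` in the representation `ρ`. -/
def intersects (ρ : ProjRep G) (u v : V) : Prop :=
  ¬ ρ.ll u v ∧ ¬ ρ.ll v u

/-- `φ_u < φ_v` (slope comparison) in the representation `ρ`. -/
def slopeLT (ρ : ProjRep G) (u v : V) : Prop :=
  ρ.R v - ρ.r v < ρ.R u - ρ.r u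

end ProjRep

/-- A trapezoid representation of a simple graph `G`: each vertex `u` corresponds to the
trapezoid `T_u` with upper corners `(A u, 1)`, `(B u, 1)` and lower corners
`(C u, 0)`, `(D u, 0)`; two distinct vertices are adjacent iff their trapezoids intersect. -/
structure TrapRep {V : Type*} (G : SimpleGraph V) where
  A : V → ℝ
  B : V → ℝ
  C : V → ℝ
  D : V → ℝ
  A_le_B : ∀ u : V, A u ≤ B u
  C_le_D : ∀ u : V, C u ≤ D u
  adj_iff : ∀ u v : V, u ≠ v →
    (G.Adj u v ↔ ¬(B u < A v ∧ D u < C v) ∧ ¬(B v < A u ∧ D v < C u))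

namespace TrapRep

variable {V : Type*} {G : SimpleGraph V}

/-- `T_u ≪_{R_T} T_v` : the trapezoid of `u` lies completely to the left of that of `v`. -/
def ll (τ : TrapRep G) (u v : V) : Prop :=
  τ.B u < τ.A v ∧ τ.D u < τ.C v

end TrapRep

variable {V : Type*}

/-- The vertex set of the induced subgraph `G − N[u]`. -/
def outside (G : SimpleGraph V) (u : V) : Set V :=
  {v | v ≠ u ∧ ¬ G.Adj u v}

/-- `v` is a covering vertex of `u`: `v ∉ N[u]` and `N(u) ⊆ N(v)`. -/
def IsCoveringVertex (G : SimpleGraph V) (u v : V) : Prop :=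
  v ≠ u ∧ ¬ G.Adj u v ∧ ∀ w : V, G.Adj u w → G.Adj v w

/-- `V_0(u)`: the set of vertices of those connected components of `G − N[u]` that contain
at least one covering vertex of `u`. -/
def V0 (G : SimpleGraph V) (u : V) : Set V :=
  {x | ∃ (hx : x ∈ outside G u) (c : V) (hc : c ∈ outside G u),
    (∀ w : V, G.Adj u w → G.Adj c w) ∧
    (G.induce (outside G u)).Reachable ⟨x, hx⟩ ⟨c, hc⟩}

/-- `u` has the right border property in `ρ`: there is no pair `w ∈ N(u)`, `x ∈ V_0(u)`
with `P_w ≪ P_x`. -/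
def HasRightBorderProperty {G : SimpleGraph V} (ρ : ProjRep G) (u : V) : Prop :=
  ¬ ∃ w x : V, G.Adj u w ∧ x ∈ V0 G u ∧ ρ.ll w x

/-- `u` has the left border property in `ρ`: there is no pair `w ∈ N(u)`, `x ∈ V_0(u)`
with `P_x ≪ P_w`. -/
def HasLeftBorderProperty {G : SimpleGraph V} (ρ : ProjRep G) (u : V) : Prop :=
  ¬ ∃ w x : V, G.Adj u w ∧ x ∈ V0 G u ∧ ρ.ll x w

/-- A projection representation is canonical if every unbounded vertex `u` admits a vertex
`x` non-adjacent to `u` whose parallelogram intersects `P_u` with `φ_x < φ_u`. -/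
def IsCanonical {G : SimpleGraph V} (ρ : ProjRep G) : Prop :=
  ∀ u ∈ ρ.unb, ∃ x : V, ¬ G.Adj u x ∧ ρ.intersects x u ∧ ρ.slopeLT x u

/-- `G` is a bounded tolerance graph: it admits a projection representation with no
unbounded vertices (a parallelogram representation). -/
def IsBoundedTolerance (G : SimpleGraph V) : Prop :=
  ∃ ρ : ProjRep G, ρ.unb = ∅

/-- `Q_u`: the set of unbounded vertices `v` with `N(v) ⊊ N(u)`. -/
def Qset {G : SimpleGraph V} (ρ : ProjRep G) (u : V) : Set V :=
  {v | v ∈ ρ.unb ∧ G.neighborSet v ⊂ G.neighborSet u}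

/-- An unbounded vertex `u` is unbounded-maximal in `ρ` if no unbounded vertex `v`
satisfies `N(u) ⊊ N(v)`. -/
def UnbMaximal {G : SimpleGraph V} (ρ : ProjRep G) (u : V) : Prop :=
  ¬ ∃ v ∈ ρ.unb, G.neighborSet u ⊂ G.neighborSet v

/-- Condition 3 for a projection representation `ρ` and trapezoid representation `τ` of the
same graph `G`. -/
def Condition3 {G : SimpleGraph V} (ρ : ProjRep G) (τ : TrapRep G) : Prop :=
  ∀ u ∈ ρ.unb, ∀ v ∈ Qset ρ u,
    ¬((∀ x ∈ V0 G u, τ.ll x u) ∧ τ.ll u v) ∧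
    ¬((∀ x ∈ V0 G u, τ.ll u x) ∧ τ.ll v u)

/-- `G` is a cocomparability graph: the complement of `G` admits a transitive orientation. -/
def IsCocomparability (G : SimpleGraph V) : Prop :=
  ∃ lt : V → V → Prop, (∀ u : V, ¬ lt u u) ∧
    (∀ a b c : V, lt a b → lt b c → lt a c) ∧
    ∀ u v : V, u ≠ v → (¬ G.Adj u v ↔ lt u v ∨ lt v u)

/-- `G` is a minimum counterexample: it admits both a projection representation and a
trapezoid representation, it is not a bounded tolerance graph, and every graph with
strictly fewer vertices admitting both kinds of representations is a bounded tolerance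
graph. -/
def MinCounterexample {V : Type*} [Fintype V] (G : SimpleGraph V) : Prop :=
  Nonempty (ProjRep G) ∧ Nonempty (TrapRep G) ∧ ¬ IsBoundedTolerance G ∧
    ∀ n : ℕ, n < Fintype.card V → ∀ H : SimpleGraph (Fin n),
      Nonempty (ProjRep H) → Nonempty (TrapRep H) → IsBoundedTolerance H

/-- `G` is a minimally unbounded tolerance graph: `G` is tolerance but not bounded
tolerance, while deleting any vertex yields a bounded tolerance graph. -/
def MinimallyUnbounded (G : SimpleGraph V) : Prop :=
  Nonempty (ProjRep G) ∧ ¬ IsBoundedTolerance G ∧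
    ∀ v : V, IsBoundedTolerance (G.induce {w : V | w ≠ v})

/-- Let `R` be a projection representation of a graph `G = (V,E)` and let
`u, v` be two vertices of `G`.  If `uv ∉ E`, `P_u` intersects `P_v` in `R`, and
`φ_v < φ_u`, then `N(u) ⊆ N(v)`. -/
theorem intersecting_unbounded {V : Type*} [Fintype V] (G : SimpleGraph V)
    (ρ : ProjRep G) (u v : V) (hnadj : ¬ G.Adj u v)
    (hint : ρ.intersects u v) (hslope : ρ.slopeLT v u) :
    G.neighborSet u ⊆ G.neighborSet v := by
  have hs : ρ.R u - ρ.r u < ρ.R v - ρ.r v := hslope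
  have huv : u ≠ v := fun h => absurd hs (by rw [h]; exact lt_irrefl _)
  obtain ⟨hi1, hi2⟩ := hint
  by_cases hu : u ∈ ρ.unb
  · intro w hw
    simp only [SimpleGraph.mem_neighborSet] at hw ⊢
    have hwb : w ∉ ρ.unb := fun hwu => ρ.adj_unbounded_unbounded u hu w hwu hw
    obtain ⟨⟨huw1, huw2⟩, hsw⟩ := (ρ.adj_unbounded_bounded u hu w hwb).1 hw
    have hab : ρ.l u = ρ.r u := ρ.unb_trivial u hu
    have hLRu : ρ.L u = ρ.R u := by have := ρ.width_eq u; linarith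
    have hwv : ρ.r v - ρ.l v = ρ.R v - ρ.L v := ρ.width_eq v
    have hww : ρ.r w - ρ.l w = ρ.R w - ρ.L w := ρ.width_eq w
    have h1 : ρ.l v ≤ ρ.r u := by
      by_contra h; push_neg at h
      have h2 : ρ.L v ≤ ρ.R u := by
        by_contra h2; push_neg at h2
        exact hi1 ⟨h, h2⟩
      linarith
    have h2 : ρ.R u ≤ ρ.R v := by
      by_contra h; push_neg at h
      have h3 : ρ.r u ≤ ρ.r v := by
        by_contra h3; push_neg at h3
        exact hi2 ⟨by linarith, by linarith⟩
      linarith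
    have hwveq : ¬ ρ.ll w v := by
      rintro ⟨hl, hL⟩
      have hRw : ρ.R u ≤ ρ.R w := by
        by_contra h; push_neg at h
        exact huw2 ⟨by linarith, by linarith⟩
      linarith
    have hvweq : ¬ ρ.ll v w := by
      rintro ⟨hl, hL⟩
      have hlw : ρ.l w ≤ ρ.r u := by
        by_contra h; push_neg at h
        exact huw1 ⟨by linarith, by linarith⟩
      linarith
    have hvw : v ≠ w := fun h => hnadj (h ▸ hw)
    by_cases hv : v ∈ ρ.unb
    · exact (ρ.adj_unbounded_bounded v hv w hwb).2 ⟨⟨hvweq, hwveq⟩, by linarith⟩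
    · exact (ρ.adj_bounded_bounded v w hvw hv hwb).2 ⟨hvweq, hwveq⟩
  · by_cases hv : v ∈ ρ.unb
    · exact absurd ((ρ.adj_unbounded_bounded v hv u hu).2 ⟨⟨hi2, hi1⟩, hs⟩).symm hnadj
    · exact absurd ((ρ.adj_bounded_bounded u v huv hu hv).2 ⟨hi1, hi2⟩) hnadj
end

section
/- Let R be a canonical projection representation of a graph G. Then for every unbounded vertex u of R there exists a covering vertex u* of u such that u* is a bounded vertex of R, P_{u*} intersects P_u in R, and φ_{u*} < φ_u. In particular, V_0(u) ≠ ∅. -/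
variable {V : Type*}

/-- Let `R` be a canonical projection representation of a graph `G`.  Then
for every unbounded vertex `u` of `R` there exists a covering vertex `u*` of `u` such that
`u*` is a bounded vertex of `R`, `P_{u*}` intersects `P_u` in `R`, and `φ_{u*} < φ_u`.
In particular, `V_0(u) ≠ ∅`. -/
theorem bounded_hovering {V : Type*} [Fintype V] (G : SimpleGraph V) (ρ : ProjRep G)
    (hcan : IsCanonical ρ) (u : V) (hu : u ∈ ρ.unb) :
    (∃ c : V, IsCoveringVertex G u c ∧ c ∉ ρ.unb ∧ ρ.intersects c u ∧ ρ.slopeLT c u) ∧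
      (V0 G u).Nonempty := by
  classical
  have hau : ρ.l u = ρ.r u := ρ.unb_trivial u hu
  have hbu : ρ.L u = ρ.R u := by have := ρ.width_eq u; linarith
  set S : Set V := {x | ¬ G.Adj u x ∧ ρ.intersects x u ∧ ρ.slopeLT x u} with hSdef
  have hSne : S.Nonempty := by
    obtain ⟨x, h1, h2, h3⟩ := hcan u hu
    exact ⟨x, h1, h2, h3⟩
  obtain ⟨x, hxS, hxmax⟩ :=
    Set.Finite.exists_maximalFor (fun v => ρ.R v - ρ.r v) S (Set.toFinite S) hSne
  obtain ⟨hxadj, hxint, hxslope⟩ := hxS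
  have hxslope' : ρ.R u - ρ.r u < ρ.R x - ρ.r x := hxslope
  have hxu : x ≠ u := by rintro rfl; exact lt_irrefl _ hxslope'
  have wu := ρ.width_eq u
  have wx := ρ.width_eq x
  obtain ⟨hi1, hi2⟩ := hxint
  have hdxu := ρ.lower_distinct x u hxu
  have hudxu := ρ.upper_distinct x u hxu
  -- x is bounded
  have hxB : x ∉ ρ.unb := by
    intro hxunb
    have hpx : ρ.l x = ρ.r x := ρ.unb_trivial x hxunb
    have hqx : ρ.L x = ρ.R x := by linarith
    -- segment x crosses segment u : r x < r u and R u < R x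
    have hrx : ρ.r x < ρ.r u := by
      by_contra h
      push_neg at h
      have h1 : ρ.r u < ρ.r x := lt_of_le_of_ne h (Ne.symm hdxu.2.2.2)
      exact hi2 ⟨by linarith, by linarith⟩
    have hRx : ρ.R u < ρ.R x := by
      by_contra h
      push_neg at h
      have h1 : ρ.R x < ρ.R u := lt_of_le_of_ne h hudxu.2.2.2
      exact hi1 ⟨by linarith, by linarith⟩
    obtain ⟨y, hy1, hy2, hy3⟩ := hcan x hxunb
    have hy3' : ρ.R x - ρ.r x < ρ.R y - ρ.r y := hy3
    have hyx : y ≠ x := by rintro rfl; exact lt_irrefl _ hy3'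
    have wy := ρ.width_eq y
    have hdyx := ρ.lower_distinct y x hyx
    have hudyx := ρ.upper_distinct y x hyx
    obtain ⟨hj1, hj2⟩ := hy2
    -- y intersects u
    have hyint : ρ.intersects y u := by
      constructor
      · rintro ⟨h1, h2⟩
        -- r y < l u, R y < L u
        have h3 : ¬ (ρ.r y < ρ.l x ∧ ρ.R y < ρ.L x) := hj1
        have h4 : ρ.l x ≤ ρ.r y := by
          by_contra h5
          push_neg at h5
          exact h3 ⟨h5, by linarith⟩
        have h5 : ρ.l x < ρ.r y := lt_of_le_of_ne h4 (Ne.symm hdyx.2.2.1)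
        linarith
      · rintro ⟨h1, h2⟩
        -- r u < l y, R u < L y
        have h3 : ¬ (ρ.r x < ρ.l y ∧ ρ.R x < ρ.L y) := hj2
        have h4 : ρ.L y ≤ ρ.R x := by
          by_contra h5
          push_neg at h5
          exact h3 ⟨by linarith, h5⟩
        have h5 : ρ.L y < ρ.R x := lt_of_le_of_ne h4 hudyx.2.1
        linarith
    -- y not adjacent to u
    have hyadj : ¬ G.Adj u y := by
      by_cases hyu : y ∈ ρ.unb
      · exact ρ.adj_unbounded_unbounded u hu y hyu
      · intro hadj
        have := ((ρ.adj_unbounded_bounded u hu y hyu).mp hadj).2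
        linarith
    have hyS : y ∈ S := ⟨hyadj, hyint, by simp only [ProjRep.slopeLT]; linarith⟩
    have := hxmax (j := y) hyS (by linarith)
    linarith
  -- covering property
  have hcov : ∀ w, G.Adj u w → G.Adj x w := by
    intro w hw
    have hwB : w ∉ ρ.unb := fun hwu => ρ.adj_unbounded_unbounded u hu w hwu hw
    obtain ⟨⟨hw1, hw2⟩, hwslope⟩ := (ρ.adj_unbounded_bounded u hu w hwB).mp hw
    have hww := ρ.width_eq w
    have hxw : x ≠ w := by rintro rfl; exact hxadj hw
    have hdwu := ρ.lower_distinct w u (fun h => by subst h; exact (G.irrefl hw))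
    have hudwu := ρ.upper_distinct w u (fun h => by subst h; exact (G.irrefl hw))
    rw [ρ.adj_bounded_bounded x w hxw hxB hwB]
    constructor
    · rintro ⟨h1, h2⟩
      -- r x < l w, R x < L w
      rcases not_and_or.mp hw1 with h | h <;> push_neg at h
      · -- l w ≤ r u
        have h3 : ρ.l w < ρ.r u := lt_of_le_of_ne h hdwu.2.1
        have h4 : ρ.L u ≤ ρ.R x := by
          by_contra h5
          push_neg at h5
          exact hi1 ⟨by linarith, h5⟩
        have h5 : ρ.L u < ρ.R x := lt_of_le_of_ne h4 (Ne.symm hudxu.2.2.1)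
        linarith
      · -- L w ≤ R u
        have h3 : ρ.L w < ρ.R u := lt_of_le_of_ne h hudwu.2.1
        have h4 : ρ.l u ≤ ρ.r x := by
          by_contra h5
          push_neg at h5
          exact hi1 ⟨h5, by linarith⟩
        have h5 : ρ.l u < ρ.r x := lt_of_le_of_ne h4 (Ne.symm hdxu.2.2.1)
        linarith
    · rintro ⟨h1, h2⟩
      -- r w < l x, R w < L x
      rcases not_and_or.mp hi2 with h | h <;> push_neg at h
      · -- l x ≤ r u
        have h3 : ρ.l x < ρ.r u := lt_of_le_of_ne h hdxu.2.1
        have h4 : ρ.L u ≤ ρ.R w := by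
          by_contra h5
          push_neg at h5
          exact hw2 ⟨by linarith, h5⟩
        have h5 : ρ.L u < ρ.R w := lt_of_le_of_ne h4 (Ne.symm hudwu.2.2.1)
        linarith
      · -- L x ≤ R u
        have h3 : ρ.L x < ρ.R u := lt_of_le_of_ne h hudxu.2.1
        have h4 : ρ.l u ≤ ρ.r w := by
          by_contra h5
          push_neg at h5
          exact hw2 ⟨h5, by linarith⟩
        have h5 : ρ.l u < ρ.r w := lt_of_le_of_ne h4 (Ne.symm hdwu.2.2.1)
        linarith
  have hxout : x ∈ outside G u := ⟨hxu, hxadj⟩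
  exact ⟨⟨x, ⟨hxu, hxadj, hcov⟩, hxB, ⟨hi1, hi2⟩, hxslope⟩,
    ⟨x, hxout, x, hxout, hcov, SimpleGraph.Reachable.refl _⟩⟩
end

section
/- Let G be a minimum counterexample and let u be a vertex of G. Then either V_0(u) = ∅ or V_0(u) is connected; equivalently, any two covering vertices of u lie in the same connected component of the induced subgraph G − N[u]. -/
variable {V : Type*}

section AuxTransfer

variable {α β : Type*}

/-- Transfer a projection representation along an injective map that reflects adjacency. -/
def ProjRep.transfer {G : SimpleGraph α} {H : SimpleGraph β} (f : α → β)
    (hf : Function.Injective f) (hadj : ∀ a b : α, G.Adj a b ↔ H.Adj (f a) (f b))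
    (ρ : ProjRep H) : ProjRep G where
  l := ρ.l ∘ f
  r := ρ.r ∘ f
  L := ρ.L ∘ f
  R := ρ.R ∘ f
  unb := f ⁻¹' ρ.unb
  l_le_r u := ρ.l_le_r (f u)
  L_le_R u := ρ.L_le_R (f u)
  width_eq u := ρ.width_eq (f u)
  unb_trivial u hu := ρ.unb_trivial (f u) hu
  lower_distinct u v huv := ρ.lower_distinct (f u) (f v) (hf.ne huv)
  upper_distinct u v huv := ρ.upper_distinct (f u) (f v) (hf.ne huv)
  slope_distinct u v huv := ρ.slope_distinct (f u) (f v) (hf.ne huv)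
  adj_bounded_bounded u v huv hu hv := by
    rw [hadj]; exact ρ.adj_bounded_bounded (f u) (f v) (hf.ne huv) hu hv
  adj_unbounded_bounded u hu v hv := by
    rw [hadj]; exact ρ.adj_unbounded_bounded (f u) hu (f v) hv
  adj_unbounded_unbounded u hu v hv := by
    rw [hadj]; exact ρ.adj_unbounded_unbounded (f u) hu (f v) hv

/-- Transfer a trapezoid representation along an injective map that reflects adjacency. -/
def TrapRep.transfer {G : SimpleGraph α} {H : SimpleGraph β} (f : α → β)
    (hf : Function.Injective f) (hadj : ∀ a b : α, G.Adj a b ↔ H.Adj (f a) (f b))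
    (τ : TrapRep H) : TrapRep G where
  A := τ.A ∘ f
  B := τ.B ∘ f
  C := τ.C ∘ f
  D := τ.D ∘ f
  A_le_B u := τ.A_le_B (f u)
  C_le_D u := τ.C_le_D (f u)
  adj_iff u v huv := by rw [hadj]; exact τ.adj_iff (f u) (f v) (hf.ne huv)

lemma exists_avoid (a b : ℝ) (hab : a < b) (F : Finset ℝ) :
    ∃ t : ℝ, a < t ∧ t < b ∧ t ∉ F := by
  have h2 : ((Set.Ioo a b) \ (F : Set ℝ)).Infinite :=
    (Set.Ioo_infinite hab).diff F.finite_toSet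
  obtain ⟨t, ht⟩ := h2.nonempty
  exact ⟨t, ht.1.1, ht.1.2, by simpa using ht.2⟩

end AuxTransfer

/-- The key geometric lemma: if `c₁, c₂` are covering vertices of `u` that are not
reachable from each other in `G − N[u]`, and `G − u` has a bounded (parallelogram)
representation in which `P_{c₁} ≪ P_{c₂}`, then `G` itself is a bounded tolerance graph. -/
theorem key_lemma {V : Type*} [Fintype V] (G : SimpleGraph V) (u c₁ c₂ : V)
    (h₁ : IsCoveringVertex G u c₁) (h₂ : IsCoveringVertex G u c₂)
    (ρ' : ProjRep (G.induce {w : V | w ≠ u})) (hun : ρ'.unb = ∅)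
    (hnr : ¬ (G.induce (outside G u)).Reachable ⟨c₁, h₁.1, h₁.2.1⟩ ⟨c₂, h₂.1, h₂.2.1⟩)
    (hll : ρ'.ll ⟨c₁, h₁.1⟩ ⟨c₂, h₂.1⟩) : IsBoundedTolerance G := by
  classical
  let S : Set V := {w : V | w ≠ u}
  let O : Set V := outside G u
  have hc₁O : c₁ ∈ O := ⟨h₁.1, h₁.2.1⟩
  have hc₂O : c₂ ∈ O := ⟨h₂.1, h₂.2.1⟩
  letI : Fintype ↥S := Fintype.ofFinite _
  -- adjacency criterion in the bounded representation ρ'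
  have adjiff : ∀ a b : ↥S, a ≠ b → (G.Adj a.1 b.1 ↔ ¬ ρ'.ll a b ∧ ¬ ρ'.ll b a) := by
    intro a b hab
    exact ρ'.adj_bounded_bounded a b hab (by simp [hun]) (by simp [hun])
  -- the set X of vertices reachable from c₁ in G − N[u]
  let Xp : ↥S → Prop := fun s => ∃ h : s.1 ∈ O, (G.induce O).Reachable ⟨c₁, hc₁O⟩ ⟨s.1, h⟩
  have hXc₁ : Xp ⟨c₁, h₁.1⟩ := ⟨hc₁O, SimpleGraph.Reachable.refl _⟩
  have hXclose : ∀ (x : ↥S) (v : V) (hv : v ∈ O), Xp x → G.Adj x.1 v → Xp ⟨v, hv.1⟩ := by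
    rintro x v hv ⟨hxO, hr⟩ hadj
    exact ⟨hv, hr.trans (SimpleGraph.Adj.reachable
      (show (G.induce O).Adj ⟨x.1, hxO⟩ ⟨v, hv⟩ from hadj))⟩
  have hXc₂ : ¬ Xp ⟨c₂, h₂.1⟩ := by
    rintro ⟨h', hr⟩
    exact hnr hr
  have lltrans : ∀ a b c : ↥S, ρ'.ll a b → ρ'.ll b c → ρ'.ll a c := by
    rintro a b c ⟨ha1, ha2⟩ ⟨hb1, hb2⟩
    exact ⟨ha1.trans ((ρ'.l_le_r b).trans_lt hb1), ha2.trans ((ρ'.L_le_R b).trans_lt hb2)⟩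
  -- every vertex in X lies completely to the left of c₂
  have hXleft : ∀ x : ↥S, Xp x → ρ'.ll x ⟨c₂, h₂.1⟩ := by
    rintro x ⟨hxO, hr⟩
    obtain ⟨w⟩ := hr
    have haux : ∀ (p q : ↥O) (_ : (G.induce O).Walk p q),
        (Xp ⟨p.1, p.2.1⟩ ∧ ρ'.ll ⟨p.1, p.2.1⟩ ⟨c₂, h₂.1⟩) →
        (Xp ⟨q.1, q.2.1⟩ ∧ ρ'.ll ⟨q.1, q.2.1⟩ ⟨c₂, h₂.1⟩) := by
      intro p q w
      induction w with
      | nil => exact id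
      | @cons p c q h w ih =>
        rintro ⟨hXp, hllp⟩
        have hadj : G.Adj p.1 c.1 := h
        have hXc : Xp ⟨c.1, c.2.1⟩ := hXclose ⟨p.1, p.2.1⟩ c.1 c.2 hXp hadj
        have hllc : ρ'.ll ⟨c.1, c.2.1⟩ ⟨c₂, h₂.1⟩ := by
          by_cases hcc : (⟨c.1, c.2.1⟩ : ↥S) = ⟨c₂, h₂.1⟩
          · exact absurd (hcc ▸ hXc) hXc₂
          · have hna : ¬ G.Adj c.1 c₂ := fun ha =>
              hXc₂ (hXclose ⟨c.1, c.2.1⟩ c₂ hc₂O hXc ha)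
            by_contra hno
            have h21 : ρ'.ll ⟨c₂, h₂.1⟩ ⟨c.1, c.2.1⟩ := by
              by_contra h21
              exact hna ((adjiff ⟨c.1, c.2.1⟩ ⟨c₂, h₂.1⟩ hcc).2 ⟨hno, h21⟩)
            have hllpc : ρ'.ll ⟨p.1, p.2.1⟩ ⟨c.1, c.2.1⟩ :=
              lltrans _ ⟨c₂, h₂.1⟩ _ hllp h21
            have hpc : (⟨p.1, p.2.1⟩ : ↥S) ≠ ⟨c.1, c.2.1⟩ := by
              intro hh
              apply hadj.ne
              have h5 : ((⟨p.1, p.2.1⟩ : ↥S) : V) = ((⟨c.1, c.2.1⟩ : ↥S) : V) :=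
                congrArg Subtype.val hh
              exact h5
            exact ((adjiff ⟨p.1, p.2.1⟩ ⟨c.1, c.2.1⟩ hpc).1 hadj).1 hllpc
        exact ih ⟨hXc, hllc⟩
    exact (haux ⟨c₁, hc₁O⟩ ⟨x.1, hxO⟩ w ⟨hXc₁, hll⟩).2
  -- extract extremal members of X
  let XS : Finset ↥S := Finset.univ.filter Xp
  have hXSne : XS.Nonempty := ⟨⟨c₁, h₁.1⟩, by simp [XS, hXc₁]⟩
  obtain ⟨x, hxXS, hxmax⟩ := Finset.exists_max_image XS (fun s => ρ'.r s) hXSne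
  obtain ⟨x', hx'XS, hx'max⟩ := Finset.exists_max_image XS (fun s => ρ'.R s) hXSne
  have hxX : Xp x := (Finset.mem_filter.1 hxXS).2
  have hx'X : Xp x' := (Finset.mem_filter.1 hx'XS).2
  have hrle : ∀ s : ↥S, Xp s → ρ'.r s ≤ ρ'.r x := fun s hs =>
    hxmax s (Finset.mem_filter.2 ⟨Finset.mem_univ _, hs⟩)
  have hRle : ∀ s : ↥S, Xp s → ρ'.R s ≤ ρ'.R x' := fun s hs =>
    hx'max s (Finset.mem_filter.2 ⟨Finset.mem_univ _, hs⟩)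
  -- coordinate sets
  let Cb : Finset ℝ := Finset.image (fun s : ↥S => ρ'.l s) Finset.univ ∪
    Finset.image (fun s : ↥S => ρ'.r s) Finset.univ
  let Ct : Finset ℝ := Finset.image (fun s : ↥S => ρ'.L s) Finset.univ ∪
    Finset.image (fun s : ↥S => ρ'.R s) Finset.univ
  let Ds : Finset ℝ := Finset.image (fun s : ↥S => ρ'.R s - ρ'.r s) Finset.univ
  have hlC : ∀ s : ↥S, ρ'.l s ∈ Cb := fun s =>
    Finset.mem_union_left _ (Finset.mem_image.2 ⟨s, Finset.mem_univ _, rfl⟩)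
  have hrC : ∀ s : ↥S, ρ'.r s ∈ Cb := fun s =>
    Finset.mem_union_right _ (Finset.mem_image.2 ⟨s, Finset.mem_univ _, rfl⟩)
  have hLC : ∀ s : ↥S, ρ'.L s ∈ Ct := fun s =>
    Finset.mem_union_left _ (Finset.mem_image.2 ⟨s, Finset.mem_univ _, rfl⟩)
  have hRC : ∀ s : ↥S, ρ'.R s ∈ Ct := fun s =>
    Finset.mem_union_right _ (Finset.mem_image.2 ⟨s, Finset.mem_univ _, rfl⟩)
  have hlc₂ : ρ'.r x < ρ'.l ⟨c₂, h₂.1⟩ := (hXleft x hxX).1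
  have hLc₂ : ρ'.R x' < ρ'.L ⟨c₂, h₂.1⟩ := (hXleft x' hx'X).2
  -- the threshold values b₁, b₂
  have hFbne : (Cb.filter (fun c => ρ'.r x < c)).Nonempty :=
    ⟨ρ'.l ⟨c₂, h₂.1⟩, Finset.mem_filter.2 ⟨hlC _, hlc₂⟩⟩
  have hFtne : (Ct.filter (fun c => ρ'.R x' < c)).Nonempty :=
    ⟨ρ'.L ⟨c₂, h₂.1⟩, Finset.mem_filter.2 ⟨hLC _, hLc₂⟩⟩
  set b₁ : ℝ := (Cb.filter (fun c => ρ'.r x < c)).min' hFbne with hb₁def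
  set b₂ : ℝ := (Ct.filter (fun c => ρ'.R x' < c)).min' hFtne with hb₂def
  have hb₁gt : ρ'.r x < b₁ :=
    (Finset.mem_filter.1 ((Cb.filter (fun c => ρ'.r x < c)).min'_mem hFbne)).2
  have hb₂gt : ρ'.R x' < b₂ :=
    (Finset.mem_filter.1 ((Ct.filter (fun c => ρ'.R x' < c)).min'_mem hFtne)).2
  have hb₁le : ∀ c ∈ Cb, ρ'.r x < c → b₁ ≤ c := fun c hc h =>
    Finset.min'_le _ c (Finset.mem_filter.2 ⟨hc, h⟩)
  have hb₂le : ∀ c ∈ Ct, ρ'.R x' < c → b₂ ≤ c := fun c hc h =>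
    Finset.min'_le _ c (Finset.mem_filter.2 ⟨hc, h⟩)
  have hcoordB : ∀ c ∈ Cb, c ≤ ρ'.r x ∨ b₁ ≤ c := by
    intro c hc
    by_cases h : ρ'.r x < c
    · exact Or.inr (hb₁le c hc h)
    · exact Or.inl (le_of_not_gt h)
  have hcoordT : ∀ c ∈ Ct, c ≤ ρ'.R x' ∨ b₂ ≤ c := by
    intro c hc
    by_cases h : ρ'.R x' < c
    · exact Or.inr (hb₂le c hc h)
    · exact Or.inl (le_of_not_gt h)
  -- choose t, T, δ
  obtain ⟨t, ht1, ht2, -⟩ := exists_avoid (ρ'.r x) b₁ hb₁gt ∅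
  obtain ⟨T, hT1, hT2, hT3⟩ := exists_avoid (ρ'.R x') b₂ hb₂gt
    (Finset.image (fun d => t + d) Ds)
  have hmpos : 0 < min (b₁ - t) (b₂ - T) := lt_min (by linarith) (by linarith)
  set δ : ℝ := min (b₁ - t) (b₂ - T) / 2 with hδdef
  have hδpos : 0 < δ := by positivity
  have hδ1 : t + δ < b₁ := by
    have h1 := min_le_left (b₁ - t) (b₂ - T)
    have : δ < b₁ - t := by
      rw [hδdef]; linarith
    linarith
  have hδ2 : T + δ < b₂ := by
    have h1 := min_le_right (b₁ - t) (b₂ - T)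
    have : δ < b₂ - T := by
      rw [hδdef]; linarith
    linarith
  -- every bottom coordinate avoids [t, t + δ], every top coordinate avoids [T, T + δ]
  have hlow : ∀ c ∈ Cb, c < t ∨ t + δ < c := by
    intro c hc
    rcases hcoordB c hc with h | h
    · exact Or.inl (lt_of_le_of_lt h ht1)
    · exact Or.inr (lt_of_lt_of_le hδ1 h)
  have hupp : ∀ c ∈ Ct, c < T ∨ T + δ < c := by
    intro c hc
    rcases hcoordT c hc with h | h
    · exact Or.inl (lt_of_le_of_lt h hT1)
    · exact Or.inr (lt_of_lt_of_le hδ2 h)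
  have hne4 : ∀ c : ℝ, (c < t ∨ t + δ < c) → t ≠ c ∧ t + δ ≠ c := by
    rintro c (h | h)
    · exact ⟨h.ne', (by linarith : c < t + δ).ne'⟩
    · exact ⟨(by linarith : t < c).ne, h.ne⟩
  have hne4' : ∀ c : ℝ, (c < T ∨ T + δ < c) → T ≠ c ∧ T + δ ≠ c := by
    rintro c (h | h)
    · exact ⟨h.ne', (by linarith : c < T + δ).ne'⟩
    · exact ⟨(by linarith : T < c).ne, h.ne⟩
  -- the main adjacency characterisation for the new vertex u
  have hmain : ∀ (v : V) (hv : v ≠ u),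
      (G.Adj u v ↔ ¬(t + δ < ρ'.l ⟨v, hv⟩ ∧ T + δ < ρ'.L ⟨v, hv⟩) ∧
        ¬(ρ'.r ⟨v, hv⟩ < t ∧ ρ'.R ⟨v, hv⟩ < T)) := by
    intro v hv
    constructor
    · intro hAdj
      constructor
      · rintro ⟨hl1, hl2⟩
        have hllc₁v : ρ'.ll ⟨c₁, h₁.1⟩ ⟨v, hv⟩ := by
          refine ⟨?_, ?_⟩
          · have := hrle ⟨c₁, h₁.1⟩ hXc₁; linarith
          · have := hRle ⟨c₁, h₁.1⟩ hXc₁; linarith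
        have hnecv : (⟨c₁, h₁.1⟩ : ↥S) ≠ ⟨v, hv⟩ := by
          intro hh
          exact h₁.2.1 (by
            have : c₁ = v := congrArg Subtype.val hh
            rw [this]; exact hAdj)
        exact ((adjiff ⟨c₁, h₁.1⟩ ⟨v, hv⟩ hnecv).1 (h₁.2.2 v hAdj)).1 hllc₁v
      · rintro ⟨hr1, hr2⟩
        have hllvc₂ : ρ'.ll ⟨v, hv⟩ ⟨c₂, h₂.1⟩ := by
          refine ⟨?_, ?_⟩
          · have := hb₁le _ (hlC ⟨c₂, h₂.1⟩) hlc₂; linarith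
          · have := hb₂le _ (hLC ⟨c₂, h₂.1⟩) hLc₂; linarith
        have hnevc : (⟨v, hv⟩ : ↥S) ≠ ⟨c₂, h₂.1⟩ := by
          intro hh
          exact h₂.2.1 (by
            have : v = c₂ := congrArg Subtype.val hh
            rw [← this]; exact hAdj)
        exact ((adjiff ⟨v, hv⟩ ⟨c₂, h₂.1⟩ hnevc).1 (h₂.2.2 v hAdj).symm).1 hllvc₂
    · intro hcond
      by_contra hnAdj
      have hvO : v ∈ O := ⟨hv, hnAdj⟩
      by_cases hXv : Xp ⟨v, hv⟩
      · refine hcond.2 ⟨?_, ?_⟩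
        · have := hrle _ hXv; linarith
        · have := hRle _ hXv; linarith
      · obtain ⟨h1, h2⟩ := hcond
        have hA : ρ'.l ⟨v, hv⟩ < ρ'.r x ∨ ρ'.L ⟨v, hv⟩ < ρ'.R x' := by
          rcases not_and_or.1 h1 with h | h
          · push_neg at h
            left
            rcases hcoordB _ (hlC ⟨v, hv⟩) with hle | hge
            · have hvx : (⟨v, hv⟩ : ↥S) ≠ x := fun hh => hXv (hh ▸ hxX)
              exact lt_of_le_of_ne hle ((ρ'.lower_distinct _ x hvx).2.1)
            · exfalso; linarith
          · push_neg at h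
            right
            rcases hcoordT _ (hLC ⟨v, hv⟩) with hle | hge
            · have hvx' : (⟨v, hv⟩ : ↥S) ≠ x' := fun hh => hXv (hh ▸ hx'X)
              exact lt_of_le_of_ne hle ((ρ'.upper_distinct _ x' hvx').2.1)
            · exfalso; linarith
        have hB : ρ'.r x < ρ'.r ⟨v, hv⟩ ∨ ρ'.R x' < ρ'.R ⟨v, hv⟩ := by
          rcases not_and_or.1 h2 with h | h
          · push_neg at h
            left
            rcases hcoordB _ (hrC ⟨v, hv⟩) with hle | hge
            · exfalso; linarith
            · linarith
          · push_neg at h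
            right
            rcases hcoordT _ (hRC ⟨v, hv⟩) with hle | hge
            · exfalso; linarith
            · linarith
        rcases hA with hA | hA
        · have hvx : (⟨v, hv⟩ : ↥S) ≠ x := fun hh => hXv (hh ▸ hxX)
          have hAdjvx : G.Adj v x.1 := by
            refine (adjiff ⟨v, hv⟩ x hvx).2 ⟨?_, ?_⟩
            · rintro ⟨hc1, hc2⟩
              rcases hB with hB | hB
              · have := ρ'.l_le_r x; linarith
              · have := ρ'.L_le_R x; have := hRle x hxX; linarith
            · rintro ⟨hc1, hc2⟩
              linarith
          exact hXv (hXclose x v hvO hxX hAdjvx.symm)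
        · have hvx' : (⟨v, hv⟩ : ↥S) ≠ x' := fun hh => hXv (hh ▸ hx'X)
          have hAdjvx' : G.Adj v x'.1 := by
            refine (adjiff ⟨v, hv⟩ x' hvx').2 ⟨?_, ?_⟩
            · rintro ⟨hc1, hc2⟩
              rcases hB with hB | hB
              · have := ρ'.l_le_r x'; have := hrle x' hx'X; linarith
              · have := ρ'.L_le_R x'; linarith
            · rintro ⟨hc1, hc2⟩
              linarith
          exact hXv (hXclose x' v hvO hx'X hAdjvx'.symm)
  -- build the bounded representation of G
  refine ⟨⟨fun v => if h : v = u then t else ρ'.l ⟨v, h⟩,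
          fun v => if h : v = u then t + δ else ρ'.r ⟨v, h⟩,
          fun v => if h : v = u then T else ρ'.L ⟨v, h⟩,
          fun v => if h : v = u then T + δ else ρ'.R ⟨v, h⟩,
          ∅, ?_, ?_, ?_, ?_, ?_, ?_, ?_, ?_, ?_, ?_⟩, rfl⟩
  · intro v
    by_cases h : v = u
    · simp only [dif_pos h]; linarith
    · simp only [dif_neg h]; exact ρ'.l_le_r _
  · intro v
    by_cases h : v = u
    · simp only [dif_pos h]; linarith
    · simp only [dif_neg h]; exact ρ'.L_le_R _
  · intro v
    by_cases h : v = u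
    · simp only [dif_pos h]; ring
    · simp only [dif_neg h]; exact ρ'.width_eq _
  · intro v hv
    exact absurd hv (Set.notMem_empty _)
  · -- lower_distinct
    intro v w hvw
    by_cases hv : v = u
    · have hw : w ≠ u := fun hh => hvw (hv.trans hh.symm)
      simp only [dif_pos hv, dif_neg hw]
      obtain ⟨p1, p2⟩ := hne4 _ (hlow _ (hlC ⟨w, hw⟩))
      obtain ⟨q1, q2⟩ := hne4 _ (hlow _ (hrC ⟨w, hw⟩))
      exact ⟨p1, q1, p2, q2⟩
    · by_cases hw : w = u
      · simp only [dif_neg hv, dif_pos hw]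
        obtain ⟨p1, p2⟩ := hne4 _ (hlow _ (hlC ⟨v, hv⟩))
        obtain ⟨q1, q2⟩ := hne4 _ (hlow _ (hrC ⟨v, hv⟩))
        exact ⟨p1.symm, p2.symm, q1.symm, q2.symm⟩
      · simp only [dif_neg hv, dif_neg hw]
        exact ρ'.lower_distinct ⟨v, hv⟩ ⟨w, hw⟩
          (fun hh => hvw (congrArg Subtype.val hh))
  · -- upper_distinct
    intro v w hvw
    by_cases hv : v = u
    · have hw : w ≠ u := fun hh => hvw (hv.trans hh.symm)
      simp only [dif_pos hv, dif_neg hw]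
      obtain ⟨p1, p2⟩ := hne4' _ (hupp _ (hLC ⟨w, hw⟩))
      obtain ⟨q1, q2⟩ := hne4' _ (hupp _ (hRC ⟨w, hw⟩))
      exact ⟨p1, q1, p2, q2⟩
    · by_cases hw : w = u
      · simp only [dif_neg hv, dif_pos hw]
        obtain ⟨p1, p2⟩ := hne4' _ (hupp _ (hLC ⟨v, hv⟩))
        obtain ⟨q1, q2⟩ := hne4' _ (hupp _ (hRC ⟨v, hv⟩))
        exact ⟨p1.symm, p2.symm, q1.symm, q2.symm⟩
      · simp only [dif_neg hv, dif_neg hw]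
        exact ρ'.upper_distinct ⟨v, hv⟩ ⟨w, hw⟩
          (fun hh => hvw (congrArg Subtype.val hh))
  · -- slope_distinct
    intro v w hvw
    by_cases hv : v = u
    · have hw : w ≠ u := fun hh => hvw (hv.trans hh.symm)
      simp only [dif_pos hv, dif_neg hw]
      intro hEq
      apply hT3
      refine Finset.mem_image.2 ⟨ρ'.R ⟨w, hw⟩ - ρ'.r ⟨w, hw⟩, ?_, by linarith⟩
      exact Finset.mem_image.2 ⟨⟨w, hw⟩, Finset.mem_univ _, rfl⟩
    · by_cases hw : w = u
      · simp only [dif_neg hv, dif_pos hw]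
        intro hEq
        apply hT3
        refine Finset.mem_image.2 ⟨ρ'.R ⟨v, hv⟩ - ρ'.r ⟨v, hv⟩, ?_, by linarith⟩
        exact Finset.mem_image.2 ⟨⟨v, hv⟩, Finset.mem_univ _, rfl⟩
      · simp only [dif_neg hv, dif_neg hw]
        exact ρ'.slope_distinct ⟨v, hv⟩ ⟨w, hw⟩
          (fun hh => hvw (congrArg Subtype.val hh))
  · -- adjacency
    intro a b hab _ _
    by_cases hAu : a = u
    · have hBu : b ≠ u := fun hh => hab (hAu.trans hh.symm)
      subst hAu
      simp only [dif_pos rfl, dif_neg hBu]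
      exact hmain b hBu
    · by_cases hBu : b = u
      · subst hBu
        simp only [dif_pos rfl, dif_neg hAu]
        rw [G.adj_comm]
        rw [hmain a hAu]
        exact and_comm
      · simp only [dif_neg hAu, dif_neg hBu]
        exact (show G.Adj a b ↔ (G.induce S).Adj ⟨a, hAu⟩ ⟨b, hBu⟩ from Iff.rfl).trans
          (ρ'.adj_bounded_bounded ⟨a, hAu⟩ ⟨b, hBu⟩
            (fun hh => hab (congrArg Subtype.val hh)) (by simp [hun]) (by simp [hun]))
  · intro a ha
    exact absurd ha (Set.notMem_empty _)
  · intro a ha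
    exact absurd ha (Set.notMem_empty _)

/-- Any two covering vertices of `u` in a minimum counterexample are connected in
`G − N[u]`. -/
theorem covering_reachable {V : Type*} [Fintype V] (G : SimpleGraph V)
    (hG : MinCounterexample G) (u c₁ c₂ : V)
    (h₁ : IsCoveringVertex G u c₁) (h₂ : IsCoveringVertex G u c₂) :
    (G.induce (outside G u)).Reachable ⟨c₁, h₁.1, h₁.2.1⟩ ⟨c₂, h₂.1, h₂.2.1⟩ := by
  classical
  by_contra hnr
  obtain ⟨⟨ρ⟩, ⟨τ⟩, hnb, hmin⟩ := hG
  set S : Set V := {w : V | w ≠ u} with hS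
  letI : Fintype ↥S := Fintype.ofFinite _
  have hcard : Fintype.card ↥S < Fintype.card V := by
    refine Fintype.card_lt_of_injective_of_notMem Subtype.val Subtype.coe_injective
      (b := u) ?_
    rintro ⟨⟨w, hw⟩, hwu⟩
    exact hw hwu
  set n := Fintype.card ↥S with hn
  let e : Fin n ≃ ↥S := (Fintype.equivFin ↥S).symm
  let Hn : SimpleGraph (Fin n) := (G.induce S).comap e
  have hadjS : ∀ a b : ↥S, (G.induce S).Adj a b ↔ G.Adj a.1 b.1 := fun a b => Iff.rfl
  let ρS : ProjRep (G.induce S) := ρ.transfer Subtype.val Subtype.coe_injective hadjS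
  let τS : TrapRep (G.induce S) := τ.transfer Subtype.val Subtype.coe_injective hadjS
  have hadjH : ∀ a b : Fin n, Hn.Adj a b ↔ (G.induce S).Adj (e a) (e b) := fun a b => Iff.rfl
  obtain ⟨ρb, hρb⟩ := hmin n hcard Hn ⟨ρS.transfer (⇑e) e.injective hadjH⟩
    ⟨τS.transfer (⇑e) e.injective hadjH⟩
  have hadjb : ∀ a b : ↥S, (G.induce S).Adj a b ↔ Hn.Adj (e.symm a) (e.symm b) := by
    intro a b
    rw [hadjH]
    simp
  let ρ' : ProjRep (G.induce S) := ρb.transfer (⇑e.symm) e.symm.injective hadjb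
  have hun : ρ'.unb = ∅ := by
    show (⇑e.symm) ⁻¹' ρb.unb = ∅
    rw [hρb, Set.preimage_empty]
  have hne : c₁ ≠ c₂ := by
    rintro rfl
    exact hnr (SimpleGraph.Reachable.refl _)
  have h12 : ¬ G.Adj c₁ c₂ := by
    intro ha
    exact hnr (SimpleGraph.Adj.reachable
      (show (G.induce (outside G u)).Adj ⟨c₁, h₁.1, h₁.2.1⟩ ⟨c₂, h₂.1, h₂.2.1⟩ from ha))
  have hll : ρ'.ll ⟨c₁, h₁.1⟩ ⟨c₂, h₂.1⟩ ∨ ρ'.ll ⟨c₂, h₂.1⟩ ⟨c₁, h₁.1⟩ := by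
    by_contra hc
    push_neg at hc
    refine h12 ?_
    have := (ρ'.adj_bounded_bounded ⟨c₁, h₁.1⟩ ⟨c₂, h₂.1⟩
      (by simpa [Subtype.ext_iff] using hne) (by simp [hun]) (by simp [hun])).2
      ⟨hc.1, hc.2⟩
    exact this
  rcases hll with hll | hll
  · exact hnb (key_lemma G u c₁ c₂ h₁ h₂ ρ' hun hnr hll)
  · exact hnb (key_lemma G u c₂ c₁ h₂ h₁ ρ' hun (fun r => hnr r.symm) hll)

lemma V0_lift_aux {V : Type*} (G : SimpleGraph V) (u : V) :
    ∀ (p q : ↥(outside G u)) (_ : (G.induce (outside G u)).Walk p q)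
      (hp : p.1 ∈ V0 G u),
      ∃ hq : q.1 ∈ V0 G u, (G.induce (V0 G u)).Reachable ⟨p.1, hp⟩ ⟨q.1, hq⟩ := by
  intro p q w
  induction w with
  | nil => exact fun hp => ⟨hp, SimpleGraph.Reachable.refl _⟩
  | @cons p c q h w ih =>
    intro hp
    have hc : c.1 ∈ V0 G u := by
      obtain ⟨hpO, d, hdO, hdcov, hrd⟩ := hp
      exact ⟨c.2, d, hdO, hdcov, (SimpleGraph.Adj.reachable h.symm).trans hrd⟩
    obtain ⟨hq, hr⟩ := ih hc
    have hadjV0 : (G.induce (V0 G u)).Adj ⟨p.1, hp⟩ ⟨c.1, hc⟩ := h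
    exact ⟨hq, hadjV0.reachable.trans hr⟩

/-- Let `G` be a minimum counterexample and let `u` be a vertex of `G`.  Then
either `V_0(u) = ∅` or `V_0(u)` is connected; equivalently, any two covering vertices of
`u` lie in the same connected component of the induced subgraph `G − N[u]`. -/
theorem two_components {V : Type*} [Fintype V] (G : SimpleGraph V)
    (hG : MinCounterexample G) (u : V) :
    (V0 G u = ∅ ∨ (G.induce (V0 G u)).Connected) ∧
      ∀ (c₁ c₂ : V) (h₁ : IsCoveringVertex G u c₁) (h₂ : IsCoveringVertex G u c₂),
        (G.induce (outside G u)).Reachable ⟨c₁, h₁.1, h₁.2.1⟩ ⟨c₂, h₂.1, h₂.2.1⟩ := by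
  have part2 : ∀ (c₁ c₂ : V) (h₁ : IsCoveringVertex G u c₁) (h₂ : IsCoveringVertex G u c₂),
      (G.induce (outside G u)).Reachable ⟨c₁, h₁.1, h₁.2.1⟩ ⟨c₂, h₂.1, h₂.2.1⟩ :=
    fun c₁ c₂ h₁ h₂ => covering_reachable G hG u c₁ c₂ h₁ h₂
  refine ⟨?_, part2⟩
  by_cases hV0 : V0 G u = ∅
  · exact Or.inl hV0
  · right
    rw [Set.eq_empty_iff_forall_notMem] at hV0
    push_neg at hV0
    obtain ⟨x₀, hx₀⟩ := hV0
    rw [SimpleGraph.connected_iff]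
    refine ⟨?_, ⟨⟨x₀, hx₀⟩⟩⟩
    rintro ⟨a, ha⟩ ⟨b, hb⟩
    obtain ⟨haO, ca, hcaO, hcacov, hra⟩ := ha
    obtain ⟨hbO, cb, hcbO, hcbcov, hrb⟩ := hb
    have hca : IsCoveringVertex G u ca := ⟨hcaO.1, hcaO.2, hcacov⟩
    have hcb : IsCoveringVertex G u cb := ⟨hcbO.1, hcbO.2, hcbcov⟩
    have hcc : (G.induce (outside G u)).Reachable ⟨ca, hcaO⟩ ⟨cb, hcbO⟩ :=
      part2 ca cb hca hcb
    have hR : (G.induce (outside G u)).Reachable ⟨a, haO⟩ ⟨b, hbO⟩ :=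
      hra.trans (hcc.trans hrb.symm)
    have haV0 : a ∈ V0 G u := ⟨haO, ca, hcaO, hcacov, hra⟩
    obtain ⟨w⟩ := hR
    obtain ⟨hq, hr⟩ := V0_lift_aux G u ⟨a, haO⟩ ⟨b, hbO⟩ w haV0
    exact hr
end

section
/- Let G be a minimum counterexample and let R be a canonical projection representation of G. Then any two distinct unbounded vertices v₁, v₂ of R satisfy N(v₁) ≠ N(v₂). -/
variable {V : Type*}

/-! ### Auxiliary material for Statement 5 -/

private lemma exists_fresh_real (a b : ℝ) (hab : a < b) (s : Finset ℝ) :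
    ∃ c, a < c ∧ c < b ∧ c ∉ s := by
  have hinf : (Set.Ioo a b \ (s : Set ℝ)).Infinite :=
    (Set.Ioo_infinite hab).diff s.finite_toSet
  obtain ⟨c, hc⟩ := hinf.nonempty
  exact ⟨c, hc.1.1, hc.1.2, fun hm => hc.2 (by simpa using hm)⟩

/-- Pull back a graph along an (injective) map. -/
private def pullbackGraph {V : Type*} (G : SimpleGraph V) {n : ℕ} (f : Fin n → V) :
    SimpleGraph (Fin n) where
  Adj i j := G.Adj (f i) (f j)
  symm := ⟨fun i j h => G.symm.symm _ _ h⟩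
  loopless := ⟨fun i h => G.loopless.irrefl _ h⟩

private def pullbackProj {V : Type*} {G : SimpleGraph V} (ρ : ProjRep G) {n : ℕ}
    (f : Fin n → V) (hf : Function.Injective f) : ProjRep (pullbackGraph G f) where
  l i := ρ.l (f i)
  r i := ρ.r (f i)
  L i := ρ.L (f i)
  R i := ρ.R (f i)
  unb := f ⁻¹' ρ.unb
  l_le_r i := ρ.l_le_r (f i)
  L_le_R i := ρ.L_le_R (f i)
  width_eq i := ρ.width_eq (f i)
  unb_trivial i hi := ρ.unb_trivial (f i) hi
  lower_distinct i j hij := ρ.lower_distinct (f i) (f j) (fun h => hij (hf h))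
  upper_distinct i j hij := ρ.upper_distinct (f i) (f j) (fun h => hij (hf h))
  slope_distinct i j hij := ρ.slope_distinct (f i) (f j) (fun h => hij (hf h))
  adj_bounded_bounded i j hij hbi hbj :=
    ρ.adj_bounded_bounded (f i) (f j) (fun h => hij (hf h)) hbi hbj
  adj_unbounded_bounded i hi j hj := ρ.adj_unbounded_bounded (f i) hi (f j) hj
  adj_unbounded_unbounded i hi j hj := ρ.adj_unbounded_unbounded (f i) hi (f j) hj

private def pullbackTrap {V : Type*} {G : SimpleGraph V} (τ : TrapRep G) {n : ℕ}
    (f : Fin n → V) (hf : Function.Injective f) : TrapRep (pullbackGraph G f) where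
  A i := τ.A (f i)
  B i := τ.B (f i)
  C i := τ.C (f i)
  D i := τ.D (f i)
  A_le_B i := τ.A_le_B (f i)
  C_le_D i := τ.C_le_D (f i)
  adj_iff i j hij := τ.adj_iff (f i) (f j) (fun h => hij (hf h))

/-- Horizontal reflection of a parallelogram representation (with no unbounded
vertices). -/
private def reflectProj {W : Type*} {H : SimpleGraph W} (B : ProjRep H) (hB : B.unb = ∅) :
    ProjRep H where
  l u := -(B.r u)
  r u := -(B.l u)
  L u := -(B.R u)
  R u := -(B.L u)
  unb := ∅
  l_le_r u := neg_le_neg (B.l_le_r u)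
  L_le_R u := neg_le_neg (B.L_le_R u)
  width_eq u := by have := B.width_eq u; linarith
  unb_trivial u hu := absurd hu (Set.notMem_empty u)
  lower_distinct u v huv := by
    obtain ⟨h1, h2, h3, h4⟩ := B.lower_distinct u v huv
    exact ⟨fun h => h4 (neg_injective h), fun h => h3 (neg_injective h),
      fun h => h2 (neg_injective h), fun h => h1 (neg_injective h)⟩
  upper_distinct u v huv := by
    obtain ⟨h1, h2, h3, h4⟩ := B.upper_distinct u v huv
    exact ⟨fun h => h4 (neg_injective h), fun h => h3 (neg_injective h),
      fun h => h2 (neg_injective h), fun h => h1 (neg_injective h)⟩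
  slope_distinct u v huv := by
    have h := B.slope_distinct u v huv
    have wu := B.width_eq u
    have wv := B.width_eq v
    intro hc
    apply h
    linarith
  adj_bounded_bounded u v huv hbu hbv := by
    have h := B.adj_bounded_bounded u v huv (by simp [hB]) (by simp [hB])
    rw [h]
    constructor
    · rintro ⟨p, q⟩
      exact ⟨fun hpq => q ⟨by linarith [hpq.1], by linarith [hpq.2]⟩,
        fun hpq => p ⟨by linarith [hpq.1], by linarith [hpq.2]⟩⟩
    · rintro ⟨p, q⟩
      exact ⟨fun hpq => q ⟨by linarith [hpq.1], by linarith [hpq.2]⟩,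
        fun hpq => p ⟨by linarith [hpq.1], by linarith [hpq.2]⟩⟩
  adj_unbounded_bounded u hu := absurd hu (Set.notMem_empty u)
  adj_unbounded_unbounded u hu := absurd hu (Set.notMem_empty u)

/-- The core of Statement 5, for the twin `v₂` of smaller slope. -/
private theorem core_lemma {V : Type*} [Fintype V] (G : SimpleGraph V)
    (hG : MinCounterexample G) (ρ : ProjRep G) (hcan : IsCanonical ρ)
    (v₁ v₂ : V) (h₁ : v₁ ∈ ρ.unb) (h₂ : v₂ ∈ ρ.unb) (hne : v₁ ≠ v₂)
    (hsl : ρ.R v₁ - ρ.r v₁ < ρ.R v₂ - ρ.r v₂)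
    (hEq : G.neighborSet v₁ = G.neighborSet v₂) : False := by
  classical
  obtain ⟨-, ⟨τ⟩, hNB, hmin⟩ := hG
  have hNiff : ∀ w, G.Adj v₁ w ↔ G.Adj v₂ w := by
    intro w
    rw [← SimpleGraph.mem_neighborSet, ← SimpleGraph.mem_neighborSet, hEq]
  obtain ⟨x₀, hx₀na, hx₀int, hx₀sl⟩ := hcan v₂ h₂
  have hx₀i1 : ¬(ρ.r x₀ < ρ.l v₂ ∧ ρ.R x₀ < ρ.L v₂) := hx₀int.1
  have hx₀i2 : ¬(ρ.r v₂ < ρ.l x₀ ∧ ρ.R v₂ < ρ.L x₀) := hx₀int.2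
  have hx₀slv : ρ.R v₂ - ρ.r v₂ < ρ.R x₀ - ρ.r x₀ := hx₀sl
  have hx₀v₂ : x₀ ≠ v₂ := by rintro rfl; exact lt_irrefl _ hx₀slv
  have hx₀v₁ : x₀ ≠ v₁ := by rintro rfl; linarith
  have hl2 : ρ.l v₂ = ρ.r v₂ := ρ.unb_trivial v₂ h₂
  have hL2 : ρ.L v₂ = ρ.R v₂ := by have := ρ.width_eq v₂; linarith
  have hx₀nav₁ : ¬ G.Adj v₁ x₀ := fun h => hx₀na ((hNiff x₀).1 h)
  -- x₀ is a covering vertex of v₂ (hence of v₁)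
  have hcov : ∀ w, G.Adj v₂ w → G.Adj x₀ w := by
    intro w hw
    have hwb : w ∉ ρ.unb := fun hwu => ρ.adj_unbounded_unbounded v₂ h₂ w hwu hw
    obtain ⟨⟨hw1, hw2⟩, hwsl⟩ := (ρ.adj_unbounded_bounded v₂ h₂ w hwb).1 hw
    have hwv₂ : w ≠ v₂ := by rintro rfl; exact (G.loopless.irrefl w) hw
    have hwx₀ : w ≠ x₀ := by rintro rfl; exact hx₀na hw
    obtain ⟨dw1, dw2, dw3, dw4⟩ := ρ.lower_distinct w v₂ hwv₂
    obtain ⟨uw1, uw2, uw3, uw4⟩ := ρ.upper_distinct w v₂ hwv₂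
    obtain ⟨dx1, dx2, dx3, dx4⟩ := ρ.lower_distinct x₀ v₂ hx₀v₂
    obtain ⟨ux1, ux2, ux3, ux4⟩ := ρ.upper_distinct x₀ v₂ hx₀v₂
    have hWw : ρ.R w - ρ.r w = ρ.L w - ρ.l w := by have := ρ.width_eq w; linarith
    have hWx : ρ.R x₀ - ρ.r x₀ = ρ.L x₀ - ρ.l x₀ := by have := ρ.width_eq x₀; linarith
    have G1 : ¬(ρ.r w < ρ.l x₀ ∧ ρ.R w < ρ.L x₀) := by
      rintro ⟨hA, hB⟩
      have hrw : ρ.r v₂ < ρ.r w := by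
        rcases not_and_or.1 hw2 with h | h
        · have h' : ρ.l v₂ ≤ ρ.r w := not_lt.1 h
          have h'' : ρ.l v₂ < ρ.r w := lt_of_le_of_ne h' (Ne.symm dw3)
          linarith
        · have h' : ρ.L v₂ ≤ ρ.R w := not_lt.1 h
          have h'' : ρ.L v₂ < ρ.R w := lt_of_le_of_ne h' (Ne.symm uw3)
          linarith
      have hx1' : ρ.r v₂ < ρ.l x₀ := by linarith
      have h2' : ρ.L x₀ ≤ ρ.R v₂ := not_lt.1 (fun hh => hx₀i2 ⟨hx1', hh⟩)
      have h3' : ρ.L x₀ < ρ.R v₂ := lt_of_le_of_ne h2' ux2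
      linarith
    have G2 : ¬(ρ.r x₀ < ρ.l w ∧ ρ.R x₀ < ρ.L w) := by
      rintro ⟨hA, hB⟩
      rcases not_and_or.1 hw1 with h | h
      · have h' : ρ.l w ≤ ρ.r v₂ := not_lt.1 h
        have hlw : ρ.l w < ρ.r v₂ := lt_of_le_of_ne h' dw2
        have h1' : ρ.r x₀ < ρ.l v₂ := by linarith
        have h2' : ρ.L v₂ ≤ ρ.R x₀ := not_lt.1 (fun hh => hx₀i1 ⟨h1', hh⟩)
        have h3' : ρ.L v₂ < ρ.R x₀ := lt_of_le_of_ne h2' (Ne.symm ux3)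
        linarith
      · have h' : ρ.L w ≤ ρ.R v₂ := not_lt.1 h
        have hLw : ρ.L w < ρ.R v₂ := lt_of_le_of_ne h' uw2
        have h1' : ρ.R x₀ < ρ.L v₂ := by linarith
        have h2' : ρ.l v₂ ≤ ρ.r x₀ := not_lt.1 (fun hh => hx₀i1 ⟨hh, h1'⟩)
        have h3' : ρ.l v₂ < ρ.r x₀ := lt_of_le_of_ne h2' (Ne.symm dx3)
        linarith
    by_cases hxu : x₀ ∈ ρ.unb
    · exact (ρ.adj_unbounded_bounded x₀ hxu w hwb).2 ⟨⟨G2, G1⟩, by linarith⟩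
    · exact (ρ.adj_bounded_bounded x₀ w (Ne.symm hwx₀) hxu hwb).2 ⟨G2, G1⟩
  -- pass to the graph G - v₂, which is bounded tolerance by minimality
  let m := Fintype.card {w : V // w ≠ v₂}
  let e : {w : V // w ≠ v₂} ≃ Fin m := Fintype.equivFin {w : V // w ≠ v₂}
  let f : Fin m → V := fun i => (e.symm i).1
  have hf : Function.Injective f := fun i j h => e.symm.injective (Subtype.ext h)
  let k : ∀ u : V, u ≠ v₂ → Fin m := fun u hu => e ⟨u, hu⟩
  have hfk : ∀ (u : V) (hu : u ≠ v₂), f (k u hu) = u := by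
    intro u hu
    show ((e.symm (e ⟨u, hu⟩)).1 : V) = u
    rw [Equiv.symm_apply_apply]
  have hmlt : m < Fintype.card V := Fintype.card_subtype_lt (x := v₂) (by simp)
  let H := pullbackGraph G f
  have hBT : IsBoundedTolerance H :=
    hmin m hmlt H ⟨pullbackProj ρ f hf⟩ ⟨pullbackTrap τ f hf⟩
  obtain ⟨B0, hB0⟩ := hBT
  have hkinj : ∀ (u v : V) (hu : u ≠ v₂) (hv : v ≠ v₂), u ≠ v → k u hu ≠ k v hv := by
    intro u v hu hv huv hk
    apply huv
    have := congrArg f hk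
    rwa [hfk, hfk] at this
  have hHadj : ∀ (u v : V) (hu : u ≠ v₂) (hv : v ≠ v₂),
      (H.Adj (k u hu) (k v hv) ↔ G.Adj u v) := by
    intro u v hu hv
    show G.Adj (f (k u hu)) (f (k v hv)) ↔ G.Adj u v
    rw [hfk, hfk]
  -- the key insertion argument
  have key : ∀ B : ProjRep H, B.unb = ∅ →
      B.r (k v₁ hne) < B.l (k x₀ hx₀v₂) → B.R (k v₁ hne) < B.L (k x₀ hx₀v₂) → False := by
    intro B hBu hll1 hll2
    have hnu : ∀ i : Fin m, i ∉ B.unb := fun i => by simp [hBu]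
    have hBadj : ∀ (u v : V) (hu : u ≠ v₂) (hv : v ≠ v₂), u ≠ v →
        (G.Adj u v ↔
          ¬(B.r (k u hu) < B.l (k v hv) ∧ B.R (k u hu) < B.L (k v hv)) ∧
          ¬(B.r (k v hv) < B.l (k u hu) ∧ B.R (k v hv) < B.L (k u hu))) := by
      intro u v hu hv huv
      exact (hHadj u v hu hv).symm.trans
        (B.adj_bounded_bounded (k u hu) (k v hv) (hkinj u v hu hv huv) (hnu _) (hnu _))
    set Yb : Finset (Fin m) :=
      Finset.univ.filter (fun j => B.r (k v₁ hne) < B.l j ∧ B.R (k v₁ hne) < B.L j) with hYb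
    have hmemY : ∀ j : Fin m,
        j ∈ Yb ↔ (B.r (k v₁ hne) < B.l j ∧ B.R (k v₁ hne) < B.L j) := by
      intro j
      rw [hYb, Finset.mem_filter]
      simp
    have hi₀Y : (k x₀ hx₀v₂) ∈ Yb := (hmemY _).2 ⟨hll1, hll2⟩
    have hYim1 : (Yb.image B.L).Nonempty := ⟨B.L (k x₀ hx₀v₂), Finset.mem_image_of_mem _ hi₀Y⟩
    have hYim2 : (Yb.image B.l).Nonempty := ⟨B.l (k x₀ hx₀v₂), Finset.mem_image_of_mem _ hi₀Y⟩
    have hmX : B.R (k v₁ hne) < (Yb.image B.L).min' hYim1 := by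
      rw [Finset.lt_min'_iff]
      intro y hy
      obtain ⟨j, hj, rfl⟩ := Finset.mem_image.1 hy
      exact ((hmemY j).1 hj).2
    obtain ⟨X, hX1, hX2, hX3⟩ := exists_fresh_real _ _ hmX
      ((Finset.univ.image B.L) ∪ (Finset.univ.image B.R))
    have hXlt : ∀ j ∈ Yb, X < B.L j := fun j hj =>
      lt_of_lt_of_le hX2 (Finset.min'_le _ _ (Finset.mem_image_of_mem _ hj))
    have hmx : B.r (k v₁ hne) < (Yb.image B.l).min' hYim2 := by
      rw [Finset.lt_min'_iff]
      intro y hy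
      obtain ⟨j, hj, rfl⟩ := Finset.mem_image.1 hy
      exact ((hmemY j).1 hj).1
    obtain ⟨x, hx1, hx2, hx3⟩ := exists_fresh_real _ _ hmx
      (((Finset.univ.image B.l) ∪ (Finset.univ.image B.r)) ∪
        (Finset.univ.image (fun j => X - (B.R j - B.r j))))
    have hxlt : ∀ j ∈ Yb, x < B.l j := fun j hj =>
      lt_of_lt_of_le hx2 (Finset.min'_le _ _ (Finset.mem_image_of_mem _ hj))
    have hxl : ∀ j, x ≠ B.l j := fun j h =>
      hx3 (Finset.mem_union_left _ (Finset.mem_union_left _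
        (Finset.mem_image.2 ⟨j, Finset.mem_univ j, h.symm⟩)))
    have hxr : ∀ j, x ≠ B.r j := fun j h =>
      hx3 (Finset.mem_union_left _ (Finset.mem_union_right _
        (Finset.mem_image.2 ⟨j, Finset.mem_univ j, h.symm⟩)))
    have hXL : ∀ j, X ≠ B.L j := fun j h =>
      hX3 (Finset.mem_union_left _ (Finset.mem_image.2 ⟨j, Finset.mem_univ j, h.symm⟩))
    have hXR : ∀ j, X ≠ B.R j := fun j h =>
      hX3 (Finset.mem_union_right _ (Finset.mem_image.2 ⟨j, Finset.mem_univ j, h.symm⟩))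
    have hxs : ∀ j, X - x ≠ B.R j - B.r j := fun j h =>
      hx3 (Finset.mem_union_right _ (Finset.mem_image.2 ⟨j, Finset.mem_univ j, by linarith⟩))
    -- the main adjacency verification for the inserted vertex v₂
    have main : ∀ (v : V) (hv : v ≠ v₂),
        (G.Adj v₂ v ↔ ¬(x < B.l (k v hv) ∧ X < B.L (k v hv)) ∧
          ¬(B.r (k v hv) < x ∧ B.R (k v hv) < X)) := by
      intro v hv
      by_cases hvS : G.Adj v₁ v
      · have hA : G.Adj v₂ v := (hNiff v).1 hvS
        have hvv₁ : v₁ ≠ v := by rintro rfl; exact G.loopless.irrefl v₁ hvS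
        refine iff_of_true hA ⟨?_, ?_⟩
        · rintro ⟨ha, hb⟩
          exact ((hBadj v₁ v hne hv hvv₁).1 hvS).1 ⟨by linarith, by linarith⟩
        · rintro ⟨ha, hb⟩
          have hvx₀ : v ≠ x₀ := by rintro rfl; exact hx₀na hA
          exact ((hBadj v x₀ hv hx₀v₂ hvx₀).1 ((hcov v hA).symm)).1
            ⟨by linarith [hxlt (k x₀ hx₀v₂) hi₀Y], by linarith [hXlt (k x₀ hx₀v₂) hi₀Y]⟩
      · have hnA : ¬ G.Adj v₂ v := fun h => hvS ((hNiff v).2 h)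
        refine iff_of_false hnA ?_
        by_cases hvv₁ : v = v₁
        · subst hvv₁
          rintro ⟨-, hq⟩
          exact hq ⟨hx1, hX1⟩
        · have hcmp := hBadj v₁ v hne hv (Ne.symm hvv₁)
          have h2 : ¬(¬(B.r (k v₁ hne) < B.l (k v hv) ∧ B.R (k v₁ hne) < B.L (k v hv)) ∧
              ¬(B.r (k v hv) < B.l (k v₁ hne) ∧ B.R (k v hv) < B.L (k v₁ hne))) :=
            fun hc => hvS (hcmp.2 hc)
          rcases not_and_or.1 h2 with hc | hc
          · rw [not_not] at hc
            have hjY : (k v hv) ∈ Yb := (hmemY _).2 hc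
            rintro ⟨hp, -⟩
            exact hp ⟨hxlt _ hjY, hXlt _ hjY⟩
          · rw [not_not] at hc
            rintro ⟨-, hq⟩
            exact hq ⟨by linarith [B.l_le_r (k v₁ hne), hc.1],
              by linarith [B.L_le_R (k v₁ hne), hc.2]⟩
    apply hNB
    refine ⟨{ l := fun u => if h : u = v₂ then x else B.l (k u h),
              r := fun u => if h : u = v₂ then x else B.r (k u h),
              L := fun u => if h : u = v₂ then X else B.L (k u h),
              R := fun u => if h : u = v₂ then X else B.R (k u h),
              unb := ∅,
              l_le_r := ?_, L_le_R := ?_, width_eq := ?_,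
              unb_trivial := fun u hu => absurd hu (Set.notMem_empty u),
              lower_distinct := ?_, upper_distinct := ?_, slope_distinct := ?_,
              adj_bounded_bounded := ?_,
              adj_unbounded_bounded := fun u hu => absurd hu (Set.notMem_empty u),
              adj_unbounded_unbounded := fun u hu => absurd hu (Set.notMem_empty u) }, rfl⟩
    · intro u
      by_cases h : u = v₂
      · simp only [dif_pos h]
        exact le_refl x
      · simp only [dif_neg h]
        exact B.l_le_r _
    · intro u
      by_cases h : u = v₂
      · simp only [dif_pos h]
        exact le_refl X
      · simp only [dif_neg h]
        exact B.L_le_R _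
    · intro u
      by_cases h : u = v₂
      · simp only [dif_pos h]
        ring
      · simp only [dif_neg h]
        exact B.width_eq _
    · intro u v huv
      by_cases hu : u = v₂ <;> by_cases hv : v = v₂
      · exact absurd (hu.trans hv.symm) huv
      · simp only [dif_pos hu, dif_neg hv]
        exact ⟨hxl _, hxr _, hxl _, hxr _⟩
      · simp only [dif_pos hv, dif_neg hu]
        exact ⟨Ne.symm (hxl _), Ne.symm (hxl _), Ne.symm (hxr _), Ne.symm (hxr _)⟩
      · simp only [dif_neg hu, dif_neg hv]
        exact B.lower_distinct _ _ (hkinj u v hu hv huv)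
    · intro u v huv
      by_cases hu : u = v₂ <;> by_cases hv : v = v₂
      · exact absurd (hu.trans hv.symm) huv
      · simp only [dif_pos hu, dif_neg hv]
        exact ⟨hXL _, hXR _, hXL _, hXR _⟩
      · simp only [dif_pos hv, dif_neg hu]
        exact ⟨Ne.symm (hXL _), Ne.symm (hXL _), Ne.symm (hXR _), Ne.symm (hXR _)⟩
      · simp only [dif_neg hu, dif_neg hv]
        exact B.upper_distinct _ _ (hkinj u v hu hv huv)
    · intro u v huv
      by_cases hu : u = v₂ <;> by_cases hv : v = v₂
      · exact absurd (hu.trans hv.symm) huv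
      · simp only [dif_pos hu, dif_neg hv]
        exact hxs _
      · simp only [dif_pos hv, dif_neg hu]
        exact fun h => hxs _ h.symm
      · simp only [dif_neg hu, dif_neg hv]
        exact B.slope_distinct _ _ (hkinj u v hu hv huv)
    · intro u v huv hu' hv'
      by_cases hu : u = v₂ <;> by_cases hv : v = v₂
      · exact absurd (hu.trans hv.symm) huv
      · simp only [dif_pos hu, dif_neg hv]
        rw [hu]
        exact main v hv
      · simp only [dif_pos hv, dif_neg hu]
        rw [hv, SimpleGraph.adj_comm]
        exact (main u hu).trans and_comm
      · simp only [dif_neg hu, dif_neg hv]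
        exact hBadj u v hu hv huv
  -- conclude: v₁ and x₀ are comparable in B0; apply `key` on either side
  have hv₁x₀ne : v₁ ≠ x₀ := Ne.symm hx₀v₁
  have hcmp := (hHadj v₁ x₀ hne hx₀v₂).symm.trans
    (B0.adj_bounded_bounded (k v₁ hne) (k x₀ hx₀v₂) (hkinj v₁ x₀ hne hx₀v₂ hv₁x₀ne)
      (by simp [hB0]) (by simp [hB0]))
  have h2 : ¬(¬(B0.r (k v₁ hne) < B0.l (k x₀ hx₀v₂) ∧ B0.R (k v₁ hne) < B0.L (k x₀ hx₀v₂)) ∧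
      ¬(B0.r (k x₀ hx₀v₂) < B0.l (k v₁ hne) ∧ B0.R (k x₀ hx₀v₂) < B0.L (k v₁ hne))) :=
    fun hc => hx₀nav₁ (hcmp.2 hc)
  rcases not_and_or.1 h2 with hc | hc
  · rw [not_not] at hc
    exact key B0 hB0 hc.1 hc.2
  · rw [not_not] at hc
    refine key (reflectProj B0 hB0) rfl ?_ ?_
    · show -(B0.l (k v₁ hne)) < -(B0.r (k x₀ hx₀v₂))
      linarith [hc.1]
    · show -(B0.L (k v₁ hne)) < -(B0.R (k x₀ hx₀v₂))
      linarith [hc.2]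

/-- Let `G` be a minimum counterexample and let `R` be a canonical projection
representation of `G`.  Then any two distinct unbounded vertices `v₁, v₂` of `R` satisfy
`N(v₁) ≠ N(v₂)`. -/
theorem not_equal_neighborhoods {V : Type*} [Fintype V] (G : SimpleGraph V)
    (hG : MinCounterexample G) (ρ : ProjRep G) (hcan : IsCanonical ρ)
    (v₁ v₂ : V) (h₁ : v₁ ∈ ρ.unb) (h₂ : v₂ ∈ ρ.unb) (hne : v₁ ≠ v₂) :
    G.neighborSet v₁ ≠ G.neighborSet v₂ := by
  intro hEq
  rcases lt_trichotomy (ρ.R v₁ - ρ.r v₁) (ρ.R v₂ - ρ.r v₂) with h | h | h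
  · exact core_lemma G hG ρ hcan v₁ v₂ h₁ h₂ hne h hEq
  · exact ρ.slope_distinct v₁ v₂ hne h
  · exact core_lemma G hG ρ hcan v₂ v₁ h₂ h₁ hne.symm h hEq.symm
end

section
/- Let R be a projection representation of a graph G and let u be an unbounded vertex of R that is unbounded-maximal. Then there exists a projection representation R* of G with the same set of unbounded vertices as R, such that φ_u < φ_v holds in R* for every unbounded vertex v ≠ u with N(v) ⊊ N(u). -/
variable {V : Type*}

section MinAngleAux

open Finset

variable {V : Type*} {G : SimpleGraph V}

private lemma exists_in_Ioo_notin (a b : ℝ) (h : a < b) (F : Finset ℝ) :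
    ∃ x, a < x ∧ x < b ∧ x ∉ F := by
  have hinf : (Set.Ioo a b).Infinite := Set.Ioo_infinite h
  obtain ⟨x, hx, hxF⟩ := hinf.exists_notMem_finset F
  exact ⟨x, hx.1, hx.2, hxF⟩

private lemma ProjRep.key {V : Type*} [Fintype V] {G : SimpleGraph V} (ρ : ProjRep G)
    (u v : V) (hu : u ∈ ρ.unb) (hv : v ∈ ρ.unb) (huv : u ≠ v)
    (hsub : G.neighborSet v ⊆ G.neighborSet u)
    (hsl : ρ.R u - ρ.r u < ρ.R v - ρ.r v) :
    ∃ ρ' : ProjRep G, ρ'.unb = ρ.unb ∧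
      (∀ x, x ≠ v → ρ'.l x = ρ.l x ∧ ρ'.r x = ρ.r x ∧ ρ'.L x = ρ.L x ∧ ρ'.R x = ρ.R x) ∧
      ρ'.R v - ρ'.r v < ρ.R u - ρ.r u := by
  classical
  have hLl : ∀ x, ρ.L x - ρ.l x = ρ.R x - ρ.r x := by
    intro x; have := ρ.width_eq x; linarith
  have hvlr : ρ.l v = ρ.r v := ρ.unb_trivial v hv
  have hvLR : ρ.L v = ρ.R v := by have := hLl v; linarith
  have hulr : ρ.l u = ρ.r u := ρ.unb_trivial u hu
  have huLR : ρ.L u = ρ.R u := by have := hLl u; linarith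
  set N : Finset V := Finset.univ.filter (fun w => G.Adj v w) with hN
  have hNadj : ∀ w ∈ N, G.Adj v w := by
    intro w hw; simpa [hN] using hw
  have hNfact : ∀ w ∈ N, (ρ.R w - ρ.r w < ρ.R v - ρ.r v) ∧ (ρ.R w - ρ.r w < ρ.R u - ρ.r u)
      ∧ ρ.L w < ρ.R v ∧ ρ.r v < ρ.r w ∧ ρ.L w < ρ.R u ∧ ρ.r u < ρ.r w := by
    intro w hw
    have hadj : G.Adj v w := hNadj w hw
    have hadju : G.Adj u w := hsub hadj
    have hwb : w ∉ ρ.unb := fun hwu => ρ.adj_unbounded_unbounded v hv w hwu hadj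
    obtain ⟨⟨hnl1, hnl2⟩, hsv⟩ := (ρ.adj_unbounded_bounded v hv w hwb).mp hadj
    obtain ⟨⟨hnl3, hnl4⟩, hsu⟩ := (ρ.adj_unbounded_bounded u hu w hwb).mp hadju
    have hvw : v ≠ w := G.ne_of_adj hadj
    have huw : u ≠ w := G.ne_of_adj hadju
    have hwd := hLl w
    have hLwRv : ρ.L w < ρ.R v := by
      have hne : ρ.L w ≠ ρ.R v := (ρ.upper_distinct w v hvw.symm).2.1
      by_contra hcon
      push_neg at hcon
      exact hnl1 ⟨by linarith, by linarith [lt_of_le_of_ne hcon (Ne.symm hne)]⟩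
    have hrvrw : ρ.r v < ρ.r w := by
      have hne : ρ.r w ≠ ρ.r v := (ρ.lower_distinct w v hvw.symm).2.2.2
      by_contra hcon
      push_neg at hcon
      have hlt : ρ.r w < ρ.r v := lt_of_le_of_ne hcon hne
      exact hnl2 ⟨by linarith, by linarith⟩
    have hLwRu : ρ.L w < ρ.R u := by
      have hne : ρ.L w ≠ ρ.R u := (ρ.upper_distinct w u huw.symm).2.1
      by_contra hcon
      push_neg at hcon
      exact hnl3 ⟨by linarith, by linarith [lt_of_le_of_ne hcon (Ne.symm hne)]⟩
    have hrurw : ρ.r u < ρ.r w := by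
      have hne : ρ.r w ≠ ρ.r u := (ρ.lower_distinct w u huw.symm).2.2.2
      by_contra hcon
      push_neg at hcon
      have hlt : ρ.r w < ρ.r u := lt_of_le_of_ne hcon hne
      exact hnl4 ⟨by linarith, by linarith⟩
    exact ⟨hsv, hsu, hLwRv, hrvrw, hLwRu, hrurw⟩
  -- choose the new slope s'
  set su : ℝ := ρ.R u - ρ.r u with hsu
  set T : Finset ℝ := insert (su - 1)
      ((N.image (fun w => ρ.R w - ρ.r w)) ∪
        ((N ×ˢ N).image (fun p => ρ.L p.1 - ρ.r p.2))) with hT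
  have hTne : T.Nonempty := insert_nonempty _ _
  have hTlt : ∀ x ∈ T, x < su := by
    intro x hx
    simp only [hT, mem_insert, mem_union, mem_image, mem_product] at hx
    rcases hx with hx | hx | hx
    · linarith
    · obtain ⟨w, hw, rfl⟩ := hx
      exact (hNfact w hw).2.1
    · obtain ⟨⟨w₁, w₂⟩, ⟨hw₁, hw₂⟩, rfl⟩ := hx
      have h₁ := (hNfact w₁ hw₁).2.2.2.2.1
      have h₂ := (hNfact w₂ hw₂).2.2.2.2.2
      simp only
      linarith
  obtain ⟨s', hs'1, hs'2, hs'F⟩ := exists_in_Ioo_notin (T.max' hTne) su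
    ((Finset.max'_lt_iff T hTne).mpr hTlt)
    (Finset.univ.image (fun y => ρ.R y - ρ.r y))
  have hs'slope : ∀ y : V, s' ≠ ρ.R y - ρ.r y := by
    intro y hy
    exact hs'F (Finset.mem_image.mpr ⟨y, Finset.mem_univ y, hy.symm⟩)
  have hs'w : ∀ w ∈ N, ρ.R w - ρ.r w < s' := by
    intro w hw
    have : ρ.R w - ρ.r w ≤ T.max' hTne := Finset.le_max' T _ (by
      simp only [hT, mem_insert, mem_union, mem_image]
      exact Or.inr (Or.inl ⟨w, hw, rfl⟩))
    linarith
  have hs'p : ∀ w₁ ∈ N, ∀ w₂ ∈ N, ρ.L w₁ - ρ.r w₂ < s' := by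
    intro w₁ hw₁ w₂ hw₂
    have : ρ.L w₁ - ρ.r w₂ ≤ T.max' hTne := Finset.le_max' T _ (by
      simp only [hT, mem_insert, mem_union, mem_image, mem_product]
      exact Or.inr (Or.inr ⟨(w₁, w₂), ⟨hw₁, hw₂⟩, rfl⟩))
    linarith
  -- choose the new position a'
  set A : Finset ℝ := insert (ρ.r v) (N.image (fun w => ρ.L w - s')) with hA
  set B : Finset ℝ := insert (ρ.R v - s') (N.image ρ.r) with hB
  have hAne : A.Nonempty := insert_nonempty _ _
  have hBne : B.Nonempty := insert_nonempty _ _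
  have hABlt : A.max' hAne < B.min' hBne := by
    rw [Finset.max'_lt_iff]
    intro x hx
    rw [Finset.lt_min'_iff]
    intro y hy
    simp only [hA, mem_insert, mem_image] at hx
    simp only [hB, mem_insert, mem_image] at hy
    rcases hx with rfl | ⟨w₁, hw₁, rfl⟩ <;> rcases hy with rfl | ⟨w₂, hw₂, rfl⟩
    · linarith
    · exact (hNfact w₂ hw₂).2.2.2.1
    · have := (hNfact w₁ hw₁).2.2.1; linarith
    · have := hs'p w₁ hw₁ w₂ hw₂; linarith
  obtain ⟨a', ha'1, ha'2, ha'F⟩ := exists_in_Ioo_notin (A.max' hAne) (B.min' hBne) hABlt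
    ((Finset.univ.image ρ.l) ∪ (Finset.univ.image ρ.r) ∪
      (Finset.univ.image (fun y => ρ.L y - s')) ∪ (Finset.univ.image (fun y => ρ.R y - s')))
  set b' : ℝ := a' + s' with hb'
  simp only [Finset.mem_union, Finset.mem_image, not_or] at ha'F
  obtain ⟨⟨⟨ha'l, ha'r⟩, ha'L⟩, ha'R⟩ := ha'F
  have ha'lne : ∀ y : V, a' ≠ ρ.l y := fun y hy => ha'l ⟨y, Finset.mem_univ y, hy.symm⟩
  have ha'rne : ∀ y : V, a' ≠ ρ.r y := fun y hy => ha'r ⟨y, Finset.mem_univ y, hy.symm⟩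
  have hb'Lne : ∀ y : V, b' ≠ ρ.L y := by
    intro y hy; exact ha'L ⟨y, Finset.mem_univ y, by rw [hb'] at hy; linarith⟩
  have hb'Rne : ∀ y : V, b' ≠ ρ.R y := by
    intro y hy; exact ha'R ⟨y, Finset.mem_univ y, by rw [hb'] at hy; linarith⟩
  have harv : ρ.r v < a' := lt_of_le_of_lt (Finset.le_max' A _ (by simp [hA])) ha'1
  have haRv : a' < ρ.R v - s' := lt_of_lt_of_le ha'2 (Finset.min'_le B _ (by simp [hB]))
  have haLw : ∀ w ∈ N, ρ.L w - s' < a' := by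
    intro w hw
    exact lt_of_le_of_lt (Finset.le_max' A _ (by
      simp only [hA, mem_insert, mem_image]; exact Or.inr ⟨w, hw, rfl⟩)) ha'1
  have harw : ∀ w ∈ N, a' < ρ.r w := by
    intro w hw
    exact lt_of_lt_of_le ha'2 (Finset.min'_le B _ (by
      simp only [hB, mem_insert, mem_image]; exact Or.inr ⟨w, hw, rfl⟩))
  -- build the new representation
  refine ⟨{
    l := Function.update ρ.l v a'
    r := Function.update ρ.r v a'
    L := Function.update ρ.L v b'
    R := Function.update ρ.R v b'
    unb := ρ.unb
    l_le_r := ?_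
    L_le_R := ?_
    width_eq := ?_
    unb_trivial := ?_
    lower_distinct := ?_
    upper_distinct := ?_
    slope_distinct := ?_
    adj_bounded_bounded := ?_
    adj_unbounded_bounded := ?_
    adj_unbounded_unbounded := ?_ }, rfl, ?_, ?_⟩
  · intro x
    by_cases hx : x = v
    · rw [hx]; simp
    · simp only [Function.update_of_ne hx]; exact ρ.l_le_r x
  · intro x
    by_cases hx : x = v
    · rw [hx]; simp
    · simp only [Function.update_of_ne hx]; exact ρ.L_le_R x
  · intro x
    by_cases hx : x = v
    · rw [hx]; simp
    · simp only [Function.update_of_ne hx]; exact ρ.width_eq x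
  · intro x hx
    by_cases hxv : x = v
    · rw [hxv]; simp
    · simp only [Function.update_of_ne hxv]; exact ρ.unb_trivial x hx
  · intro x y hxy
    by_cases hxv : x = v
    · have hyv : y ≠ v := fun h => hxy (hxv.trans h.symm)
      rw [hxv]; simp only [Function.update_self, Function.update_of_ne hyv]
      exact ⟨ha'lne y, ha'rne y, ha'lne y, ha'rne y⟩
    · by_cases hyv : y = v
      · rw [hyv]; simp only [Function.update_self, Function.update_of_ne hxv]
        exact ⟨(ha'lne x).symm, (ha'lne x).symm, (ha'rne x).symm, (ha'rne x).symm⟩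
      · simp only [Function.update_of_ne hxv, Function.update_of_ne hyv]
        exact ρ.lower_distinct x y hxy
  · intro x y hxy
    by_cases hxv : x = v
    · have hyv : y ≠ v := fun h => hxy (hxv.trans h.symm)
      rw [hxv]; simp only [Function.update_self, Function.update_of_ne hyv]
      exact ⟨hb'Lne y, hb'Rne y, hb'Lne y, hb'Rne y⟩
    · by_cases hyv : y = v
      · rw [hyv]; simp only [Function.update_self, Function.update_of_ne hxv]
        exact ⟨(hb'Lne x).symm, (hb'Lne x).symm, (hb'Rne x).symm, (hb'Rne x).symm⟩
      · simp only [Function.update_of_ne hxv, Function.update_of_ne hyv]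
        exact ρ.upper_distinct x y hxy
  · intro x y hxy
    by_cases hxv : x = v
    · have hyv : y ≠ v := fun h => hxy (hxv.trans h.symm)
      rw [hxv]; simp only [Function.update_self, Function.update_of_ne hyv]
      intro h; exact hs'slope y (by linarith)
    · by_cases hyv : y = v
      · rw [hyv]; simp only [Function.update_self, Function.update_of_ne hxv]
        intro h; exact hs'slope x (by linarith)
      · simp only [Function.update_of_ne hxv, Function.update_of_ne hyv]
        exact ρ.slope_distinct x y hxy
  · intro x y hxy hxu hyu
    have hxv : x ≠ v := fun h => hxu (h ▸ hv)
    have hyv : y ≠ v := fun h => hyu (h ▸ hv)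
    simp only [Function.update_of_ne hxv, Function.update_of_ne hyv]
    exact ρ.adj_bounded_bounded x y hxy hxu hyu
  · intro x hx w hw
    have hwv : w ≠ v := fun h => hw (h ▸ hv)
    by_cases hxv : x = v
    · rw [hxv]; simp only [Function.update_self, Function.update_of_ne hwv]
      constructor
      · intro hadj
        have hwN : w ∈ N := by simp [hN, hadj]
        have h1 := haLw w hwN
        have h2 := harw w hwN
        refine ⟨⟨fun hc => ?_, fun hc => ?_⟩, by linarith [hs'w w hwN]⟩
        · linarith [hc.2]
        · linarith [hc.1]
      · rintro ⟨⟨hA1, hA2⟩, hC⟩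
        by_contra hadj
        have hdw := hLl w
        have hslv : ρ.R w - ρ.r w < ρ.R v - ρ.r v := by linarith
        have hnint : ¬(¬(ρ.r v < ρ.l w ∧ ρ.R v < ρ.L w) ∧
            ¬(ρ.r w < ρ.l v ∧ ρ.R w < ρ.L v)) := by
          intro hint
          exact hadj ((ρ.adj_unbounded_bounded v hv w hw).mpr ⟨hint, hslv⟩)
        have hll : (ρ.r v < ρ.l w ∧ ρ.R v < ρ.L w) ∨ (ρ.r w < ρ.l v ∧ ρ.R w < ρ.L v) := by
          tauto
        rcases hll with ⟨h1, h2⟩ | ⟨h1, h2⟩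
        · exact hA1 ⟨by linarith, by linarith⟩
        · exact hA2 ⟨by linarith, by linarith⟩
    · simp only [Function.update_of_ne hxv, Function.update_of_ne hwv]
      exact ρ.adj_unbounded_bounded x hx w hw
  · intro x hx y hy
    exact ρ.adj_unbounded_unbounded x hx y hy
  · intro x hxv
    simp [Function.update_of_ne hxv]
  · simp only [Function.update_self]
    linarith

private def badSet {V : Type*} {G : SimpleGraph V} (ρ : ProjRep G) (u : V) : Set V :=
  {x | x ∈ ρ.unb ∧ x ≠ u ∧ G.neighborSet x ⊂ G.neighborSet u ∧
    ¬(ρ.R x - ρ.r x < ρ.R u - ρ.r u)}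

private lemma ProjRep.aux {V : Type*} [Fintype V] {G : SimpleGraph V} :
    ∀ n : ℕ, ∀ ρ : ProjRep G, ∀ u : V, u ∈ ρ.unb → (badSet ρ u).ncard ≤ n →
      ∃ ρs : ProjRep G, ρs.unb = ρ.unb ∧
        ∀ v ∈ ρs.unb, v ≠ u → G.neighborSet v ⊂ G.neighborSet u → ρs.slopeLT u v := by
  intro n
  induction n with
  | zero =>
    intro ρ u hu hcard
    have hempty : badSet ρ u = ∅ :=
      (Set.ncard_eq_zero (Set.toFinite _)).mp (Nat.le_zero.mp hcard)
    refine ⟨ρ, rfl, fun v hv hvu hsub => ?_⟩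
    by_contra hcon
    have hmem : v ∈ badSet ρ u := ⟨hv, hvu, hsub, hcon⟩
    simp [hempty] at hmem
  | succ n ih =>
    intro ρ u hu hcard
    rcases Set.eq_empty_or_nonempty (badSet ρ u) with hempty | ⟨v₀, hv₀⟩
    · refine ⟨ρ, rfl, fun v hv hvu hsub => ?_⟩
      by_contra hcon
      have hmem : v ∈ badSet ρ u := ⟨hv, hvu, hsub, hcon⟩
      simp [hempty] at hmem
    · obtain ⟨hv₀u, hv₀ne, hv₀sub, hv₀sl⟩ := hv₀
      have hune : u ≠ v₀ := Ne.symm hv₀ne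
      have hslne := ρ.slope_distinct u v₀ hune
      have hsl : ρ.R u - ρ.r u < ρ.R v₀ - ρ.r v₀ :=
        lt_of_le_of_ne (not_lt.mp hv₀sl) hslne
      obtain ⟨ρ', hunb, hcoords, hslv₀⟩ :=
        ρ.key u v₀ hu hv₀u hune hv₀sub.subset hsl
      have hucoords := hcoords u hune
      have hsubset : badSet ρ' u ⊆ badSet ρ u \ {v₀} := by
        intro x hx
        obtain ⟨hx1, hx2, hx3, hx4⟩ := hx
        have hxv₀ : x ≠ v₀ := by
          intro h
          apply hx4
          rw [h, hucoords.2.2.2, hucoords.2.1]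
          exact hslv₀
        have hxc := hcoords x hxv₀
        rw [hxc.2.2.2, hxc.2.1, hucoords.2.2.2, hucoords.2.1] at hx4
        exact ⟨⟨hunb ▸ hx1, hx2, hx3, hx4⟩, hxv₀⟩
      have hlt : (badSet ρ' u).ncard ≤ n := by
        have h1 : (badSet ρ' u).ncard ≤ (badSet ρ u \ {v₀}).ncard :=
          Set.ncard_le_ncard hsubset (Set.toFinite _)
        have h2 : (badSet ρ u \ {v₀}).ncard < (badSet ρ u).ncard :=
          Set.ncard_diff_singleton_lt_of_mem ⟨hv₀u, hv₀ne, hv₀sub, hv₀sl⟩ (Set.toFinite _)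
        omega
      obtain ⟨ρs, hseq, hs⟩ := ih ρ' u (hunb ▸ hu) hlt
      exact ⟨ρs, hseq.trans hunb, hs⟩

end MinAngleAux

/-- Let `R` be a projection representation of a graph `G` and let `u` be an
unbounded vertex of `R` that is unbounded-maximal.  Then there exists a projection
representation `R*` of `G` with the same set of unbounded vertices as `R`, such that
`φ_u < φ_v` holds in `R*` for every unbounded vertex `v ≠ u` with `N(v) ⊊ N(u)`. -/
theorem min_angle_one {V : Type*} [Fintype V] (G : SimpleGraph V) (ρ : ProjRep G)
    (u : V) (hu : u ∈ ρ.unb) (hmax : UnbMaximal ρ u) :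
    ∃ ρs : ProjRep G, ρs.unb = ρ.unb ∧
      ∀ v ∈ ρs.unb, v ≠ u → G.neighborSet v ⊂ G.neighborSet u → ρs.slopeLT u v := by
  obtain ⟨ρs, h1, h2⟩ := ProjRep.aux (badSet ρ u).ncard ρ u hu le_rfl
  exact ⟨ρs, h1, h2⟩
end

section
/- Let R be a projection representation of a graph G with at least one unbounded vertex. Then there exists a projection representation R* of G with the same set of unbounded vertices as R, such that the unbounded vertex u whose slope is minimum among all unbounded vertices of R* (i.e., R(u) − r(u) ≥ R(x) − r(x) in R* for every unbounded x) is unbounded-maximal. -/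
variable {V : Type*}

section MinAngleAux

variable [Fintype V] {G : SimpleGraph V}

/-- Helper: choose a real number above all of `Lo`, below all of `Hi`, avoiding `bad`. -/
lemma exists_lt_gt_avoid (Lo Hi bad : Finset ℝ)
    (h : ∀ lo ∈ Lo, ∀ hi ∈ Hi, lo < hi) :
    ∃ t : ℝ, (∀ lo ∈ Lo, lo < t) ∧ (∀ hi ∈ Hi, t < hi) ∧ t ∉ bad := by
  obtain ⟨a, b, hab, ha, hb⟩ : ∃ a b : ℝ, a < b ∧ (∀ lo ∈ Lo, lo ≤ a) ∧ (∀ hi ∈ Hi, b ≤ hi) := by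
    rcases Lo.eq_empty_or_nonempty with hL | hL
    · rcases Hi.eq_empty_or_nonempty with hH | hH
      · exact ⟨0, 1, one_pos, by simp [hL], by simp [hH]⟩
      · exact ⟨Hi.min' hH - 1, Hi.min' hH, by linarith,
          by simp [hL], fun hi hhi => Finset.min'_le _ _ hhi⟩
    · rcases Hi.eq_empty_or_nonempty with hH | hH
      · exact ⟨Lo.max' hL, Lo.max' hL + 1, by linarith,
          fun lo hlo => Finset.le_max' _ _ hlo, by simp [hH]⟩
      · exact ⟨Lo.max' hL, Hi.min' hH, h _ (Lo.max'_mem hL) _ (Hi.min'_mem hH),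
          fun lo hlo => Finset.le_max' _ _ hlo, fun hi hhi => Finset.min'_le _ _ hhi⟩
  obtain ⟨t, htmem⟩ := ((Set.Ioo_infinite hab).diff bad.finite_toSet).nonempty
  obtain ⟨⟨ht1, ht2⟩, htbad⟩ := htmem
  exact ⟨t, fun lo hlo => lt_of_le_of_lt (ha lo hlo) ht1,
    fun hi hhi => lt_of_lt_of_le ht2 (hb hi hhi), by simpa using htbad⟩

/-- Every vertex of a finite set `S` has a "maximal" (w.r.t. neighbourhood inclusion
among members of `S`) vertex above it. -/
lemma exists_unb_maximal (S : Set V) {x : V} (hx : x ∈ S) :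
    ∃ y ∈ S, G.neighborSet x ⊆ G.neighborSet y ∧
      ¬ ∃ v ∈ S, G.neighborSet y ⊂ G.neighborSet v := by
  classical
  set T : Finset V := Finset.univ.filter
    (fun v => v ∈ S ∧ G.neighborSet x ⊆ G.neighborSet v) with hT
  have hxT : x ∈ T := by simp [hT, hx]
  obtain ⟨y, hyT, hmax⟩ := T.exists_max_image (fun v => (G.neighborSet v).ncard) ⟨x, hxT⟩
  rw [hT, Finset.mem_filter] at hyT
  refine ⟨y, hyT.2.1, hyT.2.2, ?_⟩
  rintro ⟨v, hvS, hlt⟩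
  have hvT : v ∈ T := by
    rw [hT, Finset.mem_filter]
    exact ⟨Finset.mem_univ _, hvS, hyT.2.2.trans hlt.subset⟩
  have h1 := hmax v hvT
  have h2 : (G.neighborSet y).ncard < (G.neighborSet v).ncard :=
    Set.ncard_lt_ncard hlt (Set.toFinite _)
  omega

/-- The set of "bad" unbounded vertices of a representation: non-maximal ones whose slope
value exceeds that of every maximal unbounded vertex. -/
def Aset (ρ : ProjRep G) : Set V :=
  {z | z ∈ ρ.unb ∧ (∃ v ∈ ρ.unb, G.neighborSet z ⊂ G.neighborSet v) ∧
    ∀ y ∈ ρ.unb, (¬ ∃ v ∈ ρ.unb, G.neighborSet y ⊂ G.neighborSet v) →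
      ρ.R y - ρ.r y < ρ.R z - ρ.r z}

lemma goal_of_Aset_empty (ρ : ProjRep G) (hA : Aset ρ = ∅) :
    ∀ u ∈ ρ.unb, (∀ x ∈ ρ.unb, ρ.R u - ρ.r u ≥ ρ.R x - ρ.r x) → UnbMaximal ρ u := by
  intro u hu hmax
  by_contra hc
  have hc' : ∃ v ∈ ρ.unb, G.neighborSet u ⊂ G.neighborSet v := not_not.mp hc
  have huA : u ∈ Aset ρ := by
    refine ⟨hu, hc', ?_⟩
    intro y hy hymax
    have hyu : y ≠ u := by rintro rfl; exact hymax hc'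
    exact lt_of_le_of_ne (hmax y hy) (ρ.slope_distinct y u hyu)
  rw [hA] at huA
  exact huA

/-- The key modification step: an unbounded, non-maximal vertex `x` whose slope value
exceeds that of a maximal unbounded vertex `y` above it can be re-placed so that its new
slope value drops strictly below that of `y`, while nothing else changes. -/
lemma step_lemma (ρ : ProjRep G) (x y : V) (hx : x ∈ ρ.unb) (hy : y ∈ ρ.unb)
    (hyx : y ≠ x) (hsub : G.neighborSet x ⊆ G.neighborSet y)
    (hsyx : ρ.R y - ρ.r y < ρ.R x - ρ.r x) :
    ∃ ρ' : ProjRep G, ρ'.unb = ρ.unb ∧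
      (∀ z : V, z ≠ x → ρ'.r z = ρ.r z ∧ ρ'.R z = ρ.R z) ∧
      ρ'.R x - ρ'.r x < ρ.R y - ρ.r y := by
  classical
  have hit : ∀ u w : V, u ∈ ρ.unb → w ∉ ρ.unb → G.Adj u w →
      ρ.r u < ρ.r w ∧ ρ.L w < ρ.R u ∧ ρ.R w - ρ.r w < ρ.R u - ρ.r u := by
    intro u w hu hw hadj
    have hwu : w ≠ u := fun h => hw (h ▸ hu)
    obtain ⟨⟨h1, h2⟩, h3⟩ := (ρ.adj_unbounded_bounded u hu w hw).mp hadj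
    have hlu : ρ.l u = ρ.r u := ρ.unb_trivial u hu
    have hLu : ρ.L u = ρ.R u := by have := ρ.width_eq u; linarith
    have hww := ρ.width_eq w
    refine ⟨?_, ?_, h3⟩
    · by_contra hcon
      have hne : ρ.r w ≠ ρ.r u := (ρ.lower_distinct w u hwu).2.2.2
      have hlt : ρ.r w < ρ.r u := lt_of_le_of_ne (not_lt.mp hcon) hne
      exact h2 ⟨by linarith, by linarith⟩
    · by_contra hcon
      have hne : ρ.R u ≠ ρ.L w := (ρ.upper_distinct u w hwu.symm).2.2.1
      have hRL : ρ.R u < ρ.L w := lt_of_le_of_ne (not_lt.mp hcon) hne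
      exact h1 ⟨by linarith, by linarith⟩
  have miss : ∀ m : V, m ∉ ρ.unb → ¬ G.Adj x m → ρ.R m - ρ.r m < ρ.R x - ρ.r x →
      ρ.r m < ρ.r x ∨ (ρ.r x < ρ.l m ∧ ρ.R x < ρ.L m) := by
    intro m hm hnadj hsm
    have hiff := ρ.adj_unbounded_bounded x hx m hm
    have hlx : ρ.l x = ρ.r x := ρ.unb_trivial x hx
    by_cases hR : ρ.r x < ρ.l m ∧ ρ.R x < ρ.L m
    · exact Or.inr hR
    · left
      by_contra hcon
      apply hnadj
      rw [hiff]
      refine ⟨⟨hR, ?_⟩, hsm⟩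
      rintro ⟨hm1, -⟩
      rw [hlx] at hm1
      exact hcon hm1
  set NB : Finset V := Finset.univ.filter (fun w => G.Adj x w) with hNB
  have hNBadj : ∀ w ∈ NB, G.Adj x w := by
    intro w hw; rw [hNB, Finset.mem_filter] at hw; exact hw.2
  have hNBnb : ∀ w ∈ NB, w ∉ ρ.unb := by
    intro w hw hwu
    exact ρ.adj_unbounded_unbounded x hx w hwu (hNBadj w hw)
  have hNBy : ∀ w ∈ NB, G.Adj y w := fun w hw =>
    (G.mem_neighborSet y w).mp (hsub ((G.mem_neighborSet x w).mpr (hNBadj w hw)))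
  have hxfacts : ∀ w ∈ NB, ρ.r x < ρ.r w ∧ ρ.L w < ρ.R x ∧ ρ.R w - ρ.r w < ρ.R x - ρ.r x :=
    fun w hw => hit x w hx (hNBnb w hw) (hNBadj w hw)
  have hyfacts : ∀ w ∈ NB, ρ.r y < ρ.r w ∧ ρ.L w < ρ.R y ∧ ρ.R w - ρ.r w < ρ.R y - ρ.r y :=
    fun w hw => hit y w hy (hNBnb w hw) (hNBy w hw)
  set DL : Finset V := Finset.univ.filter (fun m => m ∉ ρ.unb ∧ ¬ G.Adj x m ∧
      ρ.R m - ρ.r m < ρ.R y - ρ.r y ∧ ρ.r m < ρ.r x) with hDL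
  set DR : Finset V := Finset.univ.filter (fun m => m ∉ ρ.unb ∧ ¬ G.Adj x m ∧
      ρ.R m - ρ.r m < ρ.R y - ρ.r y ∧ ¬ ρ.r m < ρ.r x) with hDR
  have hDLr : ∀ m ∈ DL, ρ.r m < ρ.r x := by
    intro m hm; rw [hDL, Finset.mem_filter] at hm; exact hm.2.2.2.2
  have hDRf : ∀ m ∈ DR, ρ.r x < ρ.l m ∧ ρ.R x < ρ.L m := by
    intro m hm; rw [hDR, Finset.mem_filter] at hm
    obtain ⟨-, hm1, hm2, hm3, hm4⟩ := hm
    rcases miss m hm1 hm2 (by linarith) with h | h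
    · exact absurd h hm4
    · exact h
  have hpt : ∀ lo ∈ (NB.image (fun w => ρ.R w - ρ.r w)) ∪
      ((NB ×ˢ NB).image (fun p => ρ.L p.1 - ρ.r p.2)),
      ∀ hi ∈ ({ρ.R y - ρ.r y} : Finset ℝ), lo < hi := by
    intro lo hlo hi hhi
    rw [Finset.mem_singleton] at hhi
    subst hhi
    rw [Finset.mem_union] at hlo
    rcases hlo with hlo | hlo
    · obtain ⟨w, hw, rfl⟩ := Finset.mem_image.mp hlo
      exact (hyfacts w hw).2.2
    · obtain ⟨⟨w1, w2⟩, hw, rfl⟩ := Finset.mem_image.mp hlo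
      rw [Finset.mem_product] at hw
      have h1 := (hyfacts w1 hw.1).2.1
      have h2 := (hyfacts w2 hw.2).1
      dsimp only
      linarith
  obtain ⟨t, htlo, hthi, htbad⟩ := exists_lt_gt_avoid _ _
    (Finset.univ.image (fun v => ρ.R v - ρ.r v)) hpt
  have hty : t < ρ.R y - ρ.r y := hthi _ (Finset.mem_singleton_self _)
  have htx : t < ρ.R x - ρ.r x := by linarith
  have htw : ∀ w ∈ NB, ρ.R w - ρ.r w < t := fun w hw =>
    htlo _ (Finset.mem_union_left _ (Finset.mem_image_of_mem _ hw))
  have htpair : ∀ w1 ∈ NB, ∀ w2 ∈ NB, ρ.L w1 - ρ.r w2 < t := by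
    intro w1 h1 w2 h2
    exact htlo _ (Finset.mem_union_right _ (Finset.mem_image.mpr
      ⟨(w1, w2), Finset.mem_product.mpr ⟨h1, h2⟩, rfl⟩))
  have hts : ∀ v : V, t ≠ ρ.R v - ρ.r v := fun v h =>
    htbad (Finset.mem_image.mpr ⟨v, Finset.mem_univ _, h.symm⟩)
  have hpp : ∀ lo ∈ (DL.image ρ.r ∪ NB.image (fun w => ρ.L w - t)),
      ∀ hi ∈ (NB.image ρ.r ∪ DR.image (fun m => ρ.L m - t)), lo < hi := by
    intro lo hlo hi hhi
    rw [Finset.mem_union] at hlo hhi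
    rcases hlo with hlo | hlo <;> rcases hhi with hhi | hhi
    · obtain ⟨m, hm, rfl⟩ := Finset.mem_image.mp hlo
      obtain ⟨w, hw, rfl⟩ := Finset.mem_image.mp hhi
      have h1 := hDLr m hm
      have h2 := (hxfacts w hw).1
      linarith
    · obtain ⟨m, hm, rfl⟩ := Finset.mem_image.mp hlo
      obtain ⟨m', hm', rfl⟩ := Finset.mem_image.mp hhi
      have h1 := hDLr m hm
      have h2 := (hDRf m' hm').2
      linarith
    · obtain ⟨w, hw, rfl⟩ := Finset.mem_image.mp hlo
      obtain ⟨w', hw', rfl⟩ := Finset.mem_image.mp hhi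
      have h1 := htpair w hw w' hw'
      linarith
    · obtain ⟨w, hw, rfl⟩ := Finset.mem_image.mp hlo
      obtain ⟨m', hm', rfl⟩ := Finset.mem_image.mp hhi
      have h1 := (hxfacts w hw).2.1
      have h2 := (hDRf m' hm').2
      linarith
  obtain ⟨p, hplo, hphi, hpbad⟩ := exists_lt_gt_avoid _ _
    ((Finset.univ.image ρ.l ∪ Finset.univ.image ρ.r) ∪
      (Finset.univ.image (fun v => ρ.L v - t) ∪ Finset.univ.image (fun v => ρ.R v - t))) hpp
  have hpDL : ∀ m ∈ DL, ρ.r m < p := fun m hm =>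
    hplo _ (Finset.mem_union_left _ (Finset.mem_image_of_mem _ hm))
  have hpNBlo : ∀ w ∈ NB, ρ.L w - t < p := fun w hw =>
    hplo _ (Finset.mem_union_right _ (Finset.mem_image_of_mem _ hw))
  have hpNBhi : ∀ w ∈ NB, p < ρ.r w := fun w hw =>
    hphi _ (Finset.mem_union_left _ (Finset.mem_image_of_mem _ hw))
  have hpDR : ∀ m ∈ DR, p < ρ.L m - t := fun m hm =>
    hphi _ (Finset.mem_union_right _ (Finset.mem_image_of_mem _ hm))
  have hpl : ∀ v : V, p ≠ ρ.l v := fun v h => hpbad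
    (Finset.mem_union_left _ (Finset.mem_union_left _
      (Finset.mem_image.mpr ⟨v, Finset.mem_univ _, h.symm⟩)))
  have hpr : ∀ v : V, p ≠ ρ.r v := fun v h => hpbad
    (Finset.mem_union_left _ (Finset.mem_union_right _
      (Finset.mem_image.mpr ⟨v, Finset.mem_univ _, h.symm⟩)))
  have hqL : ∀ v : V, p + t ≠ ρ.L v := fun v h => hpbad
    (Finset.mem_union_right _ (Finset.mem_union_left _
      (Finset.mem_image.mpr ⟨v, Finset.mem_univ _, by linarith⟩)))
  have hqR : ∀ v : V, p + t ≠ ρ.R v := fun v h => hpbad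
    (Finset.mem_union_right _ (Finset.mem_union_right _
      (Finset.mem_image.mpr ⟨v, Finset.mem_univ _, by linarith⟩)))
  refine ⟨⟨Function.update ρ.l x p, Function.update ρ.r x p,
      Function.update ρ.L x (p + t), Function.update ρ.R x (p + t),
      ρ.unb, ?_, ?_, ?_, ?_, ?_, ?_, ?_, ?_, ?_, ?_⟩, rfl, ?_, ?_⟩
  · intro u
    rcases eq_or_ne x u with rfl | h
    · simp only [Function.update_self]; exact le_rfl
    · simp only [Function.update_of_ne (Ne.symm h)]; exact ρ.l_le_r u
  · intro u
    rcases eq_or_ne x u with rfl | h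
    · simp only [Function.update_self]; exact le_rfl
    · simp only [Function.update_of_ne (Ne.symm h)]; exact ρ.L_le_R u
  · intro u
    rcases eq_or_ne x u with rfl | h
    · simp only [Function.update_self]; ring
    · simp only [Function.update_of_ne (Ne.symm h)]; exact ρ.width_eq u
  · intro u hu
    rcases eq_or_ne x u with rfl | h
    · simp only [Function.update_self]
    · simp only [Function.update_of_ne (Ne.symm h)]; exact ρ.unb_trivial u hu
  · intro u v huv
    rcases eq_or_ne x u with rfl | hux
    · have hvx : v ≠ x := Ne.symm huv
      simp only [Function.update_self, Function.update_of_ne hvx]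
      exact ⟨hpl v, hpr v, hpl v, hpr v⟩
    · rcases eq_or_ne x v with rfl | hvx
      · simp only [Function.update_self, Function.update_of_ne (Ne.symm hux)]
        exact ⟨(hpl u).symm, (hpl u).symm, (hpr u).symm, (hpr u).symm⟩
      · simp only [Function.update_of_ne (Ne.symm hux), Function.update_of_ne (Ne.symm hvx)]
        exact ρ.lower_distinct u v huv
  · intro u v huv
    rcases eq_or_ne x u with rfl | hux
    · have hvx : v ≠ x := Ne.symm huv
      simp only [Function.update_self, Function.update_of_ne hvx]
      exact ⟨hqL v, hqR v, hqL v, hqR v⟩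
    · rcases eq_or_ne x v with rfl | hvx
      · simp only [Function.update_self, Function.update_of_ne (Ne.symm hux)]
        exact ⟨(hqL u).symm, (hqL u).symm, (hqR u).symm, (hqR u).symm⟩
      · simp only [Function.update_of_ne (Ne.symm hux), Function.update_of_ne (Ne.symm hvx)]
        exact ρ.upper_distinct u v huv
  · intro u v huv
    rcases eq_or_ne x u with rfl | hux
    · have hvx : v ≠ x := Ne.symm huv
      simp only [Function.update_self, Function.update_of_ne hvx]
      intro h
      exact hts v (by linarith)
    · rcases eq_or_ne x v with rfl | hvx
      · simp only [Function.update_self, Function.update_of_ne (Ne.symm hux)]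
        intro h
        exact hts u (by linarith)
      · simp only [Function.update_of_ne (Ne.symm hux), Function.update_of_ne (Ne.symm hvx)]
        exact ρ.slope_distinct u v huv
  · intro u v huv hu hv
    have hux : u ≠ x := fun h => hu (h ▸ hx)
    have hvx : v ≠ x := fun h => hv (h ▸ hx)
    simp only [Function.update_of_ne hux, Function.update_of_ne hvx]
    exact ρ.adj_bounded_bounded u v huv hu hv
  · intro u hu v hv
    have hvx : v ≠ x := fun h => hv (h ▸ hx)
    rcases eq_or_ne x u with rfl | hux
    · simp only [Function.update_self, Function.update_of_ne hvx]
      constructor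
      · intro hadj
        have hvNB : v ∈ NB := by
          rw [hNB, Finset.mem_filter]; exact ⟨Finset.mem_univ _, hadj⟩
        have h1 := hpNBlo v hvNB
        have h2 := hpNBhi v hvNB
        have h3 := htw v hvNB
        refine ⟨⟨?_, ?_⟩, ?_⟩
        · rintro ⟨-, hb⟩; linarith
        · rintro ⟨ha, -⟩; linarith
        · linarith
      · rintro ⟨⟨h1, h2⟩, h3⟩
        by_contra hnadj
        have hst : ρ.R v - ρ.r v < t := by linarith
        have hsy' : ρ.R v - ρ.r v < ρ.R y - ρ.r y := by linarith
        by_cases hrv : ρ.r v < ρ.r x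
        · have hvDL : v ∈ DL := by
            rw [hDL, Finset.mem_filter]
            exact ⟨Finset.mem_univ _, hv, hnadj, hsy', hrv⟩
          have h4 := hpDL v hvDL
          exact h2 ⟨h4, by linarith⟩
        · have hvDR : v ∈ DR := by
            rw [hDR, Finset.mem_filter]
            exact ⟨Finset.mem_univ _, hv, hnadj, hsy', hrv⟩
          have h4 := hpDR v hvDR
          have h5 := ρ.width_eq v
          exact h1 ⟨by linarith, by linarith⟩
    · simp only [Function.update_of_ne (Ne.symm hux), Function.update_of_ne hvx]
      exact ρ.adj_unbounded_bounded u hu v hv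
  · intro u hu v hv
    exact ρ.adj_unbounded_unbounded u hu v hv
  · intro z hz
    exact ⟨Function.update_of_ne hz _ _, Function.update_of_ne hz _ _⟩
  · simp only [Function.update_self]
    linarith

end MinAngleAux


/-- Let `R` be a projection representation of a graph `G` with at least one
unbounded vertex.  Then there exists a projection representation `R*` of `G` with the same
set of unbounded vertices as `R`, such that the unbounded vertex `u` whose slope is
minimum among all unbounded vertices of `R*` (i.e. `R(u) − r(u) ≥ R(x) − r(x)` in `R*`
for every unbounded `x`) is unbounded-maximal. -/
theorem min_angle_two {V : Type*} [Fintype V] (G : SimpleGraph V) (ρ : ProjRep G)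
    (hne : ρ.unb.Nonempty) :
    ∃ ρs : ProjRep G, ρs.unb = ρ.unb ∧
      ∀ u ∈ ρs.unb, (∀ x ∈ ρs.unb, ρs.R u - ρs.r u ≥ ρs.R x - ρs.r x) →
        UnbMaximal ρs u := by
  classical
  suffices H : ∀ (n : ℕ) (ρ₀ : ProjRep G), (Aset ρ₀).ncard ≤ n →
      ∃ ρs : ProjRep G, ρs.unb = ρ₀.unb ∧
        ∀ u ∈ ρs.unb, (∀ x ∈ ρs.unb, ρs.R u - ρs.r u ≥ ρs.R x - ρs.r x) →
          UnbMaximal ρs u by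
    exact H (Aset ρ).ncard ρ le_rfl
  intro n
  induction n with
  | zero =>
    intro ρ₀ h0
    have hA : Aset ρ₀ = ∅ := by
      by_contra hne'
      obtain ⟨z, hz⟩ := Set.nonempty_iff_ne_empty.mpr hne'
      have hpos : 0 < (Aset ρ₀).ncard := (Set.ncard_pos (Set.toFinite _)).mpr ⟨z, hz⟩
      omega
    exact ⟨ρ₀, rfl, goal_of_Aset_empty ρ₀ hA⟩
  | succ n ih =>
    intro ρ₀ hcard
    rcases (Aset ρ₀).eq_empty_or_nonempty with hA | ⟨z, hz⟩
    · exact ⟨ρ₀, rfl, goal_of_Aset_empty ρ₀ hA⟩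
    · obtain ⟨hzu, hznm, hzs⟩ := hz
      obtain ⟨y, hyu, hysub, hymax⟩ := exists_unb_maximal (G := G) ρ₀.unb hzu
      have hyz : y ≠ z := by rintro rfl; exact hymax hznm
      have hsyz : ρ₀.R y - ρ₀.r y < ρ₀.R z - ρ₀.r z := hzs y hyu hymax
      obtain ⟨ρ', hub, hco, hsl⟩ := step_lemma ρ₀ z y hzu hyu hyz hysub hsyz
      have hznA : z ∉ Aset ρ' := by
        rintro ⟨-, -, h3⟩
        have h4 := h3 y (by rw [hub]; exact hyu) (by rw [hub]; exact hymax)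
        rw [(hco y hyz).1, (hco y hyz).2] at h4
        linarith
      have hsubA : Aset ρ' ⊆ Aset ρ₀ := by
        rintro w ⟨hw1, hw2, hw3⟩
        have hwz : w ≠ z := by rintro rfl; exact hznA ⟨hw1, hw2, hw3⟩
        rw [hub] at hw1 hw2
        refine ⟨hw1, hw2, ?_⟩
        intro y' hy' hy'max
        have hy'z : y' ≠ z := by rintro rfl; exact hy'max hznm
        have h7 := hw3 y' (by rw [hub]; exact hy') (by rw [hub]; exact hy'max)
        rw [(hco y' hy'z).1, (hco y' hy'z).2, (hco w hwz).1, (hco w hwz).2] at h7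
        exact h7
      have hss : Aset ρ' ⊂ Aset ρ₀ := ⟨hsubA, fun hcon => hznA (hcon ⟨hzu, hznm, hzs⟩)⟩
      have hlt : (Aset ρ').ncard < (Aset ρ₀).ncard :=
        Set.ncard_lt_ncard hss (Set.toFinite _)
      obtain ⟨ρs, h1, h2⟩ := ih ρ' (by omega)
      exact ⟨ρs, h1.trans hub, h2⟩
end

section
/- Let G be a tolerance graph which is also a cocomparability graph, and suppose that the complement of G is triangle-free (equivalently, G contains no three distinct pairwise non-adjacent vertices). Then G is a bounded tolerance graph, i.e., G admits a projection representation with no unbounded vertices. -/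
variable {V : Type*}

namespace ProjRep

variable {V : Type*} {G : SimpleGraph V}

/-- slope value `R u - r u`. -/
noncomputable def sl (ρ : ProjRep G) (v : V) : ℝ := ρ.R v - ρ.r v

lemma sl_eq_upper (ρ : ProjRep G) (v : V) : ρ.sl v = ρ.L v - ρ.l v := by
  have := ρ.width_eq v; unfold sl; linarith

lemma sl_ne (ρ : ProjRep G) {a b : V} (h : a ≠ b) : ρ.sl a ≠ ρ.sl b :=
  ρ.slope_distinct a b h

lemma intersects_symm (ρ : ProjRep G) {a b : V} (h : ρ.intersects a b) :
    ρ.intersects b a := ⟨h.2, h.1⟩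

lemma adj_iff_bb (ρ : ProjRep G) {a b : V} (hab : a ≠ b) (ha : a ∉ ρ.unb)
    (hb : b ∉ ρ.unb) : G.Adj a b ↔ ρ.intersects a b :=
  ρ.adj_bounded_bounded a b hab ha hb

lemma adj_iff_ub (ρ : ProjRep G) {a b : V} (ha : a ∈ ρ.unb) (hb : b ∉ ρ.unb) :
    G.Adj a b ↔ ρ.intersects a b ∧ ρ.sl b < ρ.sl a :=
  ρ.adj_unbounded_bounded a ha b hb

lemma intersects_of_adj (ρ : ProjRep G) {a b : V} (h : G.Adj a b) :
    ρ.intersects a b := by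
  by_cases ha : a ∈ ρ.unb <;> by_cases hb : b ∈ ρ.unb
  · exact absurd h (ρ.adj_unbounded_unbounded a ha b hb)
  · exact ((ρ.adj_iff_ub ha hb).mp h).1
  · exact ρ.intersects_symm ((ρ.adj_iff_ub hb ha).mp h.symm).1
  · exact (ρ.adj_iff_bb h.ne ha hb).mp h

lemma not_adj_of_ll (ρ : ProjRep G) {a b : V} (h : ρ.ll a b) : ¬ G.Adj a b :=
  fun hadj => (ρ.intersects_of_adj hadj).1 h

lemma indep_triple (hfree : Gᶜ.CliqueFree 3) {a b c : V} (hab : a ≠ b) (hac : a ≠ c)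
    (hbc : b ≠ c) (h1 : ¬ G.Adj a b) (h2 : ¬ G.Adj a c) (h3 : ¬ G.Adj b c) : False := by
  classical
  apply hfree {a, b, c}
  rw [SimpleGraph.isNClique_iff]
  constructor
  · intro x hx y hy hxy
    simp only [Finset.coe_insert, Set.mem_insert_iff, Finset.coe_singleton,
      Set.mem_singleton_iff, Finset.mem_coe, Finset.mem_insert, Finset.mem_singleton] at hx hy
    rw [SimpleGraph.compl_adj]
    refine ⟨hxy, ?_⟩
    rcases hx with rfl | rfl | rfl <;> rcases hy with rfl | rfl | rfl <;>
      first
        | exact absurd rfl hxy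
        | exact h1
        | exact fun h => h1 h.symm
        | exact h2
        | exact fun h => h2 h.symm
        | exact h3
        | exact fun h => h3 h.symm
  · exact Finset.card_eq_three.mpr ⟨a, b, c, hab, hac, hbc, rfl⟩

lemma not_ll_iff (ρ : ProjRep G) (a b : V) :
    ¬ ρ.ll a b ↔ ρ.l b ≤ ρ.r a ∨ ρ.L b ≤ ρ.R a := by
  unfold ll; rw [not_and_or, not_lt, not_lt]

/-- Lemma H : two parallelograms crossing the segment of an unbounded vertex `u`, one with
smaller slope value, one with larger, must intersect each other. -/
lemma cross (ρ : ProjRep G) {u w c : V} (hu : u ∈ ρ.unb)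
    (hwu : w ≠ u) (hcu : c ≠ u)
    (hiw : ρ.intersects u w) (hic : ρ.intersects u c)
    (hsw : ρ.sl w < ρ.sl u) (hsc : ρ.sl u < ρ.sl c) :
    ρ.intersects w c := by
  have hlu : ρ.l u = ρ.r u := ρ.unb_trivial u hu
  have hLu : ρ.L u = ρ.R u := by have := ρ.width_eq u; linarith
  obtain ⟨lw1, lw2, lw3, lw4⟩ := ρ.lower_distinct w u hwu
  obtain ⟨uw1, uw2, uw3, uw4⟩ := ρ.upper_distinct w u hwu
  obtain ⟨lc1, lc2, lc3, lc4⟩ := ρ.lower_distinct c u hcu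
  obtain ⟨uc1, uc2, uc3, uc4⟩ := ρ.upper_distinct c u hcu
  have hslw : ρ.sl w = ρ.L w - ρ.l w := ρ.sl_eq_upper w
  have hslc : ρ.sl c = ρ.L c - ρ.l c := ρ.sl_eq_upper c
  have hslu : ρ.sl u = ρ.R u - ρ.r u := rfl
  have hslw' : ρ.sl w = ρ.R w - ρ.r w := rfl
  have hslc' : ρ.sl c = ρ.R c - ρ.r c := rfl
  constructor
  · rintro ⟨h1, h2⟩   -- r w < l c ∧ R w < L c
    have hw2 := (ρ.not_ll_iff w u).mp hiw.2
    have hc1 := (ρ.not_ll_iff u c).mp hic.1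
    rcases hw2 with hw2 | hw2
    · -- l u ≤ r w, so r u < r w
      have hrw : ρ.r u < ρ.r w := lt_of_le_of_ne (hlu ▸ hw2) (Ne.symm lw4)
      rcases hc1 with h | h
      · -- l c ≤ r u, but r u < r w < l c
        linarith
      · -- L c ≤ R u, strict
        have hLc : ρ.L c < ρ.R u := lt_of_le_of_ne (hLu ▸ h) uc2
        have := ρ.l_le_r c
        linarith
    · -- L u ≤ R w, so R u < R w
      have hRw : ρ.R u < ρ.R w := lt_of_le_of_ne (hLu ▸ hw2) (Ne.symm uw4)
      rcases hc1 with h | h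
      · have hlc : ρ.l c < ρ.r u := lt_of_le_of_ne (hlu ▸ h) lc2
        linarith
      · have hLc : ρ.L c < ρ.R u := lt_of_le_of_ne (hLu ▸ h) uc2
        linarith
  · rintro ⟨h1, h2⟩   -- r c < l w ∧ R c < L w
    have hw1 := (ρ.not_ll_iff u w).mp hiw.1
    have hc2 := (ρ.not_ll_iff c u).mp hic.2
    rcases hw1 with hw1 | hw1
    · -- l w ≤ r u, strict
      have hlw : ρ.l w < ρ.r u := lt_of_le_of_ne hw1 lw2
      rcases hc2 with h | h
      · -- l u ≤ r c, i.e. r u ≤ r c, but r c < l w < r u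
        rw [hlu] at h; linarith
      · -- L u ≤ R c, so R u < R c
        have hRc : ρ.R u < ρ.R c := lt_of_le_of_ne (hLu ▸ h) (Ne.symm uc4)
        linarith
    · -- L w ≤ R u, strict
      have hLw : ρ.L w < ρ.R u := lt_of_le_of_ne hw1 uw2
      rcases hc2 with h | h
      · have hrc : ρ.r u < ρ.r c := lt_of_le_of_ne (hlu ▸ h) (Ne.symm lc4)
        linarith
      · rw [hLu] at h; linarith


end ProjRep

namespace ProjRep

variable {V : Type*} {G : SimpleGraph V}

/-- Rotation of a projection representation by 180 degrees. -/
noncomputable def rotate (ρ : ProjRep G) : ProjRep G where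
  l v := -ρ.R v
  r v := -ρ.L v
  L v := -ρ.r v
  R v := -ρ.l v
  unb := ρ.unb
  l_le_r v := by have := ρ.L_le_R v; linarith
  L_le_R v := by have := ρ.l_le_r v; linarith
  width_eq v := by have := ρ.width_eq v; linarith
  unb_trivial v hv := by have h1 := ρ.unb_trivial v hv; have := ρ.width_eq v; linarith
  lower_distinct a b hab := by
    obtain ⟨h1, h2, h3, h4⟩ := ρ.upper_distinct a b hab
    exact ⟨fun h => h4 (neg_injective h), fun h => h3 (neg_injective h),
      fun h => h2 (neg_injective h), fun h => h1 (neg_injective h)⟩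
  upper_distinct a b hab := by
    obtain ⟨h1, h2, h3, h4⟩ := ρ.lower_distinct a b hab
    exact ⟨fun h => h4 (neg_injective h), fun h => h3 (neg_injective h),
      fun h => h2 (neg_injective h), fun h => h1 (neg_injective h)⟩
  slope_distinct a b hab := by
    have h := ρ.slope_distinct a b hab
    have wa := ρ.width_eq a; have wb := ρ.width_eq b
    intro hcon; apply h; linarith
  adj_bounded_bounded a b hab ha hb := by
    rw [ρ.adj_bounded_bounded a b hab ha hb]
    constructor
    · rintro ⟨x, y⟩
      constructor
      · rintro ⟨h1, h2⟩; exact y ⟨by linarith, by linarith⟩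
      · rintro ⟨h1, h2⟩; exact x ⟨by linarith, by linarith⟩
    · rintro ⟨x, y⟩
      constructor
      · rintro ⟨h1, h2⟩; exact y ⟨by linarith, by linarith⟩
      · rintro ⟨h1, h2⟩; exact x ⟨by linarith, by linarith⟩
  adj_unbounded_bounded u hu v hv := by
    rw [ρ.adj_unbounded_bounded u hu v hv]
    have wu := ρ.width_eq u; have wv := ρ.width_eq v
    constructor
    · rintro ⟨⟨x, y⟩, hs⟩
      refine ⟨⟨?_, ?_⟩, by linarith⟩
      · rintro ⟨h1, h2⟩; exact y ⟨by linarith, by linarith⟩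
      · rintro ⟨h1, h2⟩; exact x ⟨by linarith, by linarith⟩
    · rintro ⟨⟨x, y⟩, hs⟩
      refine ⟨⟨?_, ?_⟩, by linarith⟩
      · rintro ⟨h1, h2⟩; exact y ⟨by linarith, by linarith⟩
      · rintro ⟨h1, h2⟩; exact x ⟨by linarith, by linarith⟩
  adj_unbounded_unbounded := ρ.adj_unbounded_unbounded

@[simp] lemma unb_rotate (ρ : ProjRep G) : (ρ.rotate).unb = ρ.unb := rfl

lemma rotate_l (ρ : ProjRep G) (v : V) : (ρ.rotate).l v = -ρ.R v := rfl
lemma rotate_r (ρ : ProjRep G) (v : V) : (ρ.rotate).r v = -ρ.L v := rfl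
lemma rotate_L (ρ : ProjRep G) (v : V) : (ρ.rotate).L v = -ρ.r v := rfl
lemma rotate_R (ρ : ProjRep G) (v : V) : (ρ.rotate).R v = -ρ.l v := rfl

lemma sl_rotate (ρ : ProjRep G) (v : V) : (ρ.rotate).sl v = ρ.sl v := by
  have := ρ.width_eq v
  unfold sl
  rw [rotate_R, rotate_r]
  linarith

lemma ll_rotate (ρ : ProjRep G) (a b : V) : (ρ.rotate).ll a b ↔ ρ.ll b a := by
  unfold ll
  rw [rotate_r, rotate_l, rotate_R, rotate_L]
  constructor
  · rintro ⟨h1, h2⟩; exact ⟨by linarith, by linarith⟩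
  · rintro ⟨h1, h2⟩; exact ⟨by linarith, by linarith⟩

lemma intersects_rotate (ρ : ProjRep G) (a b : V) :
    (ρ.rotate).intersects a b ↔ ρ.intersects a b := by
  unfold intersects
  rw [ll_rotate, ll_rotate]
  exact And.comm

section Meas

variable [Fintype V]

/-- The set of "bad" pairs: an unbounded vertex together with a distinct non-neighbor whose
parallelogram intersects its segment. -/
def Bad (ρ : ProjRep G) : Set (V × V) :=
  {q | q.1 ∈ ρ.unb ∧ q.2 ≠ q.1 ∧ ¬ G.Adj q.1 q.2 ∧ ρ.intersects q.1 q.2}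

/-- Termination measure. -/
noncomputable def meas (ρ : ProjRep G) : ℕ := ρ.unb.ncard + (Bad ρ).ncard

lemma bad_rotate (ρ : ProjRep G) : Bad (ρ.rotate) = Bad ρ := by
  ext q
  unfold Bad
  simp only [Set.mem_setOf_eq, unb_rotate, intersects_rotate]

lemma meas_rotate (ρ : ProjRep G) : meas ρ.rotate = meas ρ := by
  unfold meas
  rw [bad_rotate, unb_rotate]

/-- Declaring bounded an unbounded vertex intersected by no non-neighbor. -/
def debound (ρ : ProjRep G) (u : V) (hu : u ∈ ρ.unb)
    (hCI : ∀ v, v ≠ u → ¬ G.Adj u v → ¬ ρ.intersects u v) : ProjRep G where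
  l := ρ.l
  r := ρ.r
  L := ρ.L
  R := ρ.R
  unb := ρ.unb \ {u}
  l_le_r := ρ.l_le_r
  L_le_R := ρ.L_le_R
  width_eq := ρ.width_eq
  unb_trivial := fun v hv => ρ.unb_trivial v hv.1
  lower_distinct := ρ.lower_distinct
  upper_distinct := ρ.upper_distinct
  slope_distinct := ρ.slope_distinct
  adj_bounded_bounded := by
    intro a b hab ha hb
    by_cases hau : a = u
    · rw [hau] at hab ⊢
      by_cases hbu : b = u
      · exact absurd hbu.symm hab
      · have hb' : b ∉ ρ.unb := fun h => hb ⟨h, hbu⟩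
        constructor
        · intro h; exact ((ρ.adj_iff_ub hu hb').mp h).1
        · intro hi
          by_contra hn
          exact hCI b hbu hn hi
    · by_cases hbu : b = u
      · rw [hbu] at hab ⊢
        have ha' : a ∉ ρ.unb := fun h => ha ⟨h, hau⟩
        constructor
        · intro h
          have hi := ((ρ.adj_iff_ub hu ha').mp h.symm).1
          exact ⟨hi.2, hi.1⟩
        · intro hi
          by_contra hn
          exact hCI a hau (fun h => hn h.symm) ⟨hi.2, hi.1⟩
      · exact ρ.adj_bounded_bounded a b hab (fun h => ha ⟨h, hau⟩) (fun h => hb ⟨h, hbu⟩)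
  adj_unbounded_bounded := by
    intro a ha b hb
    by_cases hbu : b = u
    · rw [hbu]
      have hf : ¬ G.Adj a u := ρ.adj_unbounded_unbounded a ha.1 u hu
      apply iff_of_false hf
      rintro ⟨hi, _⟩
      exact hCI a ha.2 (fun h => hf h.symm) ⟨hi.2, hi.1⟩
    · exact ρ.adj_unbounded_bounded a ha.1 b (fun h => hb ⟨h, hbu⟩)
  adj_unbounded_unbounded := fun a ha b hb => ρ.adj_unbounded_unbounded a ha.1 b hb.1

lemma boundStep (ρ : ProjRep G) {u : V} (hu : u ∈ ρ.unb)
    (hCI : ∀ v, v ≠ u → ¬ G.Adj u v → ¬ ρ.intersects u v) :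
    ∃ ρ' : ProjRep G, meas ρ' < meas ρ := by
  refine ⟨debound ρ u hu hCI, ?_⟩
  have h1 : (ρ.unb \ {u}).ncard < ρ.unb.ncard :=
    Set.ncard_diff_singleton_lt_of_mem hu (Set.toFinite _)
  have h2 : (Bad (debound ρ u hu hCI)).ncard ≤ (Bad ρ).ncard := by
    apply Set.ncard_le_ncard _ (Set.toFinite _)
    rintro ⟨x, y⟩ ⟨hx, hyx, hn, hi⟩
    exact ⟨hx.1, hyx, hn, hi⟩
  have h3 : (debound ρ u hu hCI).unb = ρ.unb \ {u} := rfl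
  unfold meas
  rw [h3]
  omega

end Meas

end ProjRep

namespace ProjRep

variable {V : Type*} {G : SimpleGraph V}

section MoveRep

variable [DecidableEq V] (ρ : ProjRep G) (u c : V) (lc rc Lc Rc : ℝ)
variable (hu : u ∈ ρ.unb) (hcu : c ≠ u) (hnadj : ¬ G.Adj u c)
variable (hgeom1 : lc ≤ rc) (hgeom2 : rc - lc = Rc - Lc)
variable (hdistl : ∀ v, v ≠ c → lc ≠ ρ.l v ∧ lc ≠ ρ.r v ∧ rc ≠ ρ.l v ∧ rc ≠ ρ.r v)
variable (hdistu : ∀ v, v ≠ c → Lc ≠ ρ.L v ∧ Lc ≠ ρ.R v ∧ Rc ≠ ρ.L v ∧ Rc ≠ ρ.R v)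
variable (hdists : ∀ v, v ≠ c → Rc - rc ≠ ρ.R v - ρ.r v)
variable (hkey1 : ∀ v, v ≠ u → v ≠ c →
  ¬(rc < ρ.l v ∧ Rc < ρ.L v) ∧ ¬(ρ.r v < lc ∧ ρ.R v < Lc))
variable (hkey2 : rc < ρ.l u ∧ Rc < ρ.L u)
variable (hUNIV : ∀ v, v ≠ u → v ≠ c → G.Adj c v)
variable (hslope : ∀ x ∈ ρ.unb, Rc - rc < ρ.R x - ρ.r x)

/-- Relocating the vertex `c` to a new (bounded) parallelogram. -/
def moveRep : ProjRep G where
  l := Function.update ρ.l c lc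
  r := Function.update ρ.r c rc
  L := Function.update ρ.L c Lc
  R := Function.update ρ.R c Rc
  unb := ρ.unb \ {c}
  l_le_r := by
    intro v
    by_cases hv : v = c
    · rw [hv]; simp only [Function.update_self]; exact hgeom1
    · simp only [Function.update_of_ne hv]; exact ρ.l_le_r v
  L_le_R := by
    intro v
    by_cases hv : v = c
    · rw [hv]; simp only [Function.update_self]; linarith
    · simp only [Function.update_of_ne hv]; exact ρ.L_le_R v
  width_eq := by
    intro v
    by_cases hv : v = c
    · rw [hv]; simp only [Function.update_self]; linarith
    · simp only [Function.update_of_ne hv]; exact ρ.width_eq v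
  unb_trivial := by
    intro v hv
    have hvc : v ≠ c := fun h => hv.2 (by rw [h]; rfl)
    simp only [Function.update_of_ne hvc]
    exact ρ.unb_trivial v hv.1
  lower_distinct := by
    intro x y hxy
    by_cases hx : x = c
    · have hy : y ≠ c := fun h => hxy (hx.trans h.symm)
      rw [hx]
      simp only [Function.update_self, Function.update_of_ne hy]
      obtain ⟨h1, h2, h3, h4⟩ := hdistl y hy
      exact ⟨h1, h2, h3, h4⟩
    · by_cases hy : y = c
      · rw [hy]
        simp only [Function.update_self, Function.update_of_ne hx]
        obtain ⟨h1, h2, h3, h4⟩ := hdistl x hx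
        exact ⟨h1.symm, h3.symm, h2.symm, h4.symm⟩
      · simp only [Function.update_of_ne hx, Function.update_of_ne hy]
        exact ρ.lower_distinct x y hxy
  upper_distinct := by
    intro x y hxy
    by_cases hx : x = c
    · have hy : y ≠ c := fun h => hxy (hx.trans h.symm)
      rw [hx]
      simp only [Function.update_self, Function.update_of_ne hy]
      obtain ⟨h1, h2, h3, h4⟩ := hdistu y hy
      exact ⟨h1, h2, h3, h4⟩
    · by_cases hy : y = c
      · rw [hy]
        simp only [Function.update_self, Function.update_of_ne hx]
        obtain ⟨h1, h2, h3, h4⟩ := hdistu x hx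
        exact ⟨h1.symm, h3.symm, h2.symm, h4.symm⟩
      · simp only [Function.update_of_ne hx, Function.update_of_ne hy]
        exact ρ.upper_distinct x y hxy
  slope_distinct := by
    intro x y hxy
    by_cases hx : x = c
    · have hy : y ≠ c := fun h => hxy (hx.trans h.symm)
      rw [hx]
      simp only [Function.update_self, Function.update_of_ne hy]
      exact hdists y hy
    · by_cases hy : y = c
      · rw [hy]
        simp only [Function.update_self, Function.update_of_ne hx]
        exact fun h => hdists x hx h.symm
      · simp only [Function.update_of_ne hx, Function.update_of_ne hy]
        exact ρ.slope_distinct x y hxy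
  adj_bounded_bounded := by
    intro x y hxy hx hy
    by_cases hxc : x = c
    · rw [hxc] at hxy ⊢
      have hyc : y ≠ c := Ne.symm hxy
      simp only [Function.update_self, Function.update_of_ne hyc]
      by_cases hyu : y = u
      · exact absurd (by rw [hyu]; exact ⟨hu, fun h => hcu h.symm⟩) hy
      · exact iff_of_true (hUNIV y hyu hyc) (hkey1 y hyu hyc)
    · by_cases hyc : y = c
      · rw [hyc] at hxy ⊢
        simp only [Function.update_self, Function.update_of_ne hxc]
        by_cases hxu : x = u
        · exact absurd (by rw [hxu]; exact ⟨hu, fun h => hcu h.symm⟩) hx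
        · exact iff_of_true ((hUNIV x hxu hxc).symm)
            ⟨(hkey1 x hxu hxc).2, (hkey1 x hxu hxc).1⟩
      · simp only [Function.update_of_ne hxc, Function.update_of_ne hyc]
        exact ρ.adj_bounded_bounded x y hxy (fun h => hx ⟨h, hxc⟩) (fun h => hy ⟨h, hyc⟩)
  adj_unbounded_bounded := by
    intro x hx y hy
    have hx1 : x ∈ ρ.unb := hx.1
    have hxc : x ≠ c := fun h => hx.2 h
    by_cases hyc : y = c
    · rw [hyc]
      simp only [Function.update_self, Function.update_of_ne hxc]
      by_cases hxu : x = u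
      · rw [hxu]
        apply iff_of_false hnadj
        rintro ⟨⟨_, h2⟩, _⟩
        exact h2 hkey2
      · apply iff_of_true ((hUNIV x hxu hxc).symm)
        exact ⟨⟨(hkey1 x hxu hxc).2, (hkey1 x hxu hxc).1⟩, hslope x hx1⟩
    · simp only [Function.update_of_ne hxc, Function.update_of_ne hyc]
      exact ρ.adj_unbounded_bounded x hx1 y (fun h => hy ⟨h, hyc⟩)
  adj_unbounded_unbounded := fun a ha b hb => ρ.adj_unbounded_unbounded a ha.1 b hb.1

end MoveRep

end ProjRep

namespace ProjRep

variable {V : Type*} {G : SimpleGraph V}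

section Steps

variable [Fintype V]

/-- All endpoints appearing in a representation. -/
noncomputable def pts (ρ : ProjRep G) : Finset ℝ :=
  (Finset.univ.image ρ.l ∪ Finset.univ.image ρ.r) ∪
    (Finset.univ.image ρ.L ∪ Finset.univ.image ρ.R)

lemma l_mem_pts (ρ : ProjRep G) (v : V) : ρ.l v ∈ pts ρ :=
  Finset.mem_union_left _ (Finset.mem_union_left _
    (Finset.mem_image_of_mem _ (Finset.mem_univ v)))

lemma r_mem_pts (ρ : ProjRep G) (v : V) : ρ.r v ∈ pts ρ :=
  Finset.mem_union_left _ (Finset.mem_union_right _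
    (Finset.mem_image_of_mem _ (Finset.mem_univ v)))

lemma L_mem_pts (ρ : ProjRep G) (v : V) : ρ.L v ∈ pts ρ :=
  Finset.mem_union_right _ (Finset.mem_union_left _
    (Finset.mem_image_of_mem _ (Finset.mem_univ v)))

lemma R_mem_pts (ρ : ProjRep G) (v : V) : ρ.R v ∈ pts ρ :=
  Finset.mem_union_right _ (Finset.mem_union_right _
    (Finset.mem_image_of_mem _ (Finset.mem_univ v)))

lemma meas_lt_of (ρ ρ' : ProjRep G) (u c : V)
    (h1 : ρ'.unb = ρ.unb \ {c})
    (h2 : Bad ρ' ⊆ Bad ρ \ {(u, c)}) (h3 : (u, c) ∈ Bad ρ) :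
    meas ρ' < meas ρ := by
  have e1 : ρ'.unb.ncard ≤ ρ.unb.ncard := by
    rw [h1]
    exact Set.ncard_le_ncard Set.diff_subset (Set.toFinite _)
  have e2 : (Bad ρ').ncard < (Bad ρ).ncard :=
    lt_of_le_of_lt (Set.ncard_le_ncard h2 (Set.toFinite _))
      (Set.ncard_diff_singleton_lt_of_mem h3 (Set.toFinite _))
  unfold meas
  omega

lemma bad_subset_of (ρ ρ' : ProjRep G) (u c : V)
    (hunb : ρ'.unb = ρ.unb \ {c})
    (hcoords : ∀ v, v ≠ c → ρ'.l v = ρ.l v ∧ ρ'.r v = ρ.r v ∧ ρ'.L v = ρ.L v ∧ ρ'.R v = ρ.R v)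
    (hllcu : ρ'.ll c u)
    (hUNIV : ∀ v, v ≠ u → v ≠ c → G.Adj c v) :
    Bad ρ' ⊆ Bad ρ \ {(u, c)} := by
  rintro ⟨x, y⟩ ⟨hx, hyx, hn, hint⟩
  rw [hunb] at hx
  have hxc : x ≠ c := fun h => hx.2 h
  have hyc : y ≠ c := by
    intro h
    by_cases hxu : x = u
    · rw [hxu, h] at hint
      exact hint.2 hllcu
    · exact hn (by rw [h]; exact (hUNIV x hxu hxc).symm)
  have hix : ρ.intersects x y := by
    obtain ⟨ex1, ex2, ex3, ex4⟩ := hcoords x hxc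
    obtain ⟨ey1, ey2, ey3, ey4⟩ := hcoords y hyc
    unfold intersects ll at hint ⊢
    rw [ex2, ex4, ey1, ey3, ey2, ey4, ex1, ex3] at hint
    exact hint
  refine ⟨⟨hx.1, hyx, hn, hix⟩, ?_⟩
  intro hmem
  rw [Set.mem_singleton_iff, Prod.ext_iff] at hmem
  exact hyc hmem.2

lemma moveStep (ρ : ProjRep G) (hfree : Gᶜ.CliqueFree 3) {u c : V}
    (hu : u ∈ ρ.unb) (hmin : ∀ w ∈ ρ.unb, ρ.sl u ≤ ρ.sl w)
    (hcu : c ≠ u) (hnadj : ¬ G.Adj u c) (hic : ρ.intersects u c)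
    (hCR : ∀ v, ¬ ρ.ll u v) :
    ∃ ρ' : ProjRep G, meas ρ' < meas ρ := by
  classical
  have hlu : ρ.l u = ρ.r u := ρ.unb_trivial u hu
  have hLu : ρ.L u = ρ.R u := by have := ρ.width_eq u; linarith
  have hscc : ρ.sl u < ρ.sl c := by
    by_cases h : c ∈ ρ.unb
    · exact lt_of_le_of_ne (hmin c h) (ρ.sl_ne (Ne.symm hcu))
    · have h2 := hnadj
      rw [ρ.adj_iff_ub hu h] at h2
      rcases not_and_or.mp h2 with h' | h'
      · exact absurd hic h'
      · exact lt_of_le_of_ne (not_lt.mp h') (ρ.sl_ne (Ne.symm hcu))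
  have hUNIV : ∀ v, v ≠ u → v ≠ c → G.Adj c v := by
    intro v hvu hvc
    by_contra hnc
    by_cases hadj : G.Adj u v
    · have hv' : v ∉ ρ.unb := fun h => ρ.adj_unbounded_unbounded u hu v h hadj
      obtain ⟨hivu, hsv⟩ := (ρ.adj_iff_ub hu hv').mp hadj
      have hvc' : ρ.intersects v c := ρ.cross hu hvu hcu hivu hic hsv hscc
      by_cases hc' : c ∈ ρ.unb
      · exact hnc ((ρ.adj_iff_ub hc' hv').mpr ⟨ρ.intersects_symm hvc', hsv.trans hscc⟩)
      · exact hnc ((ρ.adj_iff_bb (Ne.symm hvc) hc' hv').mpr (ρ.intersects_symm hvc'))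
    · exact indep_triple hfree (Ne.symm hvu) (Ne.symm hcu) hvc hadj hnadj
        (fun h => hnc h.symm)
  have hpoke : ∀ v, v ≠ u → ρ.l v < ρ.r u ∨ ρ.L v < ρ.R u := by
    intro v hv
    rcases (ρ.not_ll_iff u v).mp (hCR v) with h | h
    · exact Or.inl (lt_of_le_of_ne h ((ρ.lower_distinct v u hv).2.1))
    · exact Or.inr (lt_of_le_of_ne h ((ρ.upper_distinct v u hv).2.1))
  -- choice of the constants
  have hptsne : (pts ρ).Nonempty := ⟨ρ.l u, l_mem_pts ρ u⟩
  have hslu : ρ.sl u = ρ.R u - ρ.r u := rfl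
  obtain ⟨δ, hδpos, hδP, hδp⟩ : ∃ δ : ℝ, 0 < δ ∧
      (∀ e ∈ pts ρ, e < ρ.R u → δ ≤ ρ.R u - e) ∧
      (∀ e ∈ pts ρ, e < ρ.r u → δ ≤ ρ.r u - e) := by
    classical
    have h1T : (1:ℝ) ∈ (((pts ρ).image (fun e => ρ.R u - e) ∪
        (pts ρ).image (fun e => ρ.r u - e) ∪ {1}).filter (fun x => 0 < x)) :=
      Finset.mem_filter.mpr ⟨Finset.mem_union_right _ (Finset.mem_singleton_self 1), one_pos⟩
    refine ⟨_, (Finset.mem_filter.mp (Finset.min'_mem _ ⟨1, h1T⟩)).2, ?_, ?_⟩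
    · intro e he h
      exact Finset.min'_le _ _ (Finset.mem_filter.mpr
        ⟨Finset.mem_union_left _ (Finset.mem_union_left _
          (Finset.mem_image_of_mem _ he)), by linarith⟩)
    · intro e he h
      exact Finset.min'_le _ _ (Finset.mem_filter.mpr
        ⟨Finset.mem_union_left _ (Finset.mem_union_right _
          (Finset.mem_image_of_mem _ he)), by linarith⟩)
  have hbpos : 0 < δ/2 := by positivity
  have hbδ : δ/2 < δ := by linarith
  obtain ⟨aa, haa, haaA⟩ := (Set.Ioo_infinite hbpos).exists_notMem_finset
    ((Finset.univ.image ρ.sl).image (fun t => t - ρ.sl u + δ/2))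
  obtain ⟨haa0, haab⟩ := haa
  obtain ⟨m₀, hm₀⟩ : ∃ m₀ : ℝ, ∀ e ∈ pts ρ, m₀ ≤ e :=
    ⟨(pts ρ).min' hptsne, fun e he => Finset.min'_le _ _ he⟩
  obtain ⟨lc, rc, Lc, Rc, hgeomW, hrcval, hRcval⟩ :
      ∃ lc rc Lc Rc : ℝ, (rc - lc = Rc - Lc ∧ lc ≤ rc ∧
        (∀ e ∈ pts ρ, lc < e ∧ Lc < e)) ∧ rc = ρ.r u - aa ∧ Rc = ρ.R u - δ/2 := by
    refine ⟨ρ.r u - aa - (|ρ.r u - aa - m₀| + |ρ.R u - δ/2 - m₀| + 1), ρ.r u - aa,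
      ρ.R u - δ/2 - (|ρ.r u - aa - m₀| + |ρ.R u - δ/2 - m₀| + 1), ρ.R u - δ/2,
      ⟨by ring, ?_, ?_⟩, rfl, rfl⟩
    · have h4 : (0:ℝ) ≤ |ρ.r u - aa - m₀| := abs_nonneg _
      have h5 : (0:ℝ) ≤ |ρ.R u - δ/2 - m₀| := abs_nonneg _
      linarith
    · intro e he
      have h1 : m₀ ≤ e := hm₀ e he
      have h2 : ρ.r u - aa - m₀ ≤ |ρ.r u - aa - m₀| := le_abs_self _
      have h3 : ρ.R u - δ/2 - m₀ ≤ |ρ.R u - δ/2 - m₀| := le_abs_self _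
      have h4 : (0:ℝ) ≤ |ρ.r u - aa - m₀| := abs_nonneg _
      have h5 : (0:ℝ) ≤ |ρ.R u - δ/2 - m₀| := abs_nonneg _
      constructor <;> linarith
  obtain ⟨hgeom2, hgeom1, hlow⟩ := hgeomW
  have hrp : rc < ρ.r u := by rw [hrcval]; linarith
  have hRP : Rc < ρ.R u := by rw [hRcval]; linarith
  have hrc_gt : ∀ e ∈ pts ρ, e < ρ.r u → e < rc := by
    intro e he h
    have := hδp e he h
    rw [hrcval]; linarith
  have hRc_gt : ∀ e ∈ pts ρ, e < ρ.R u → e < Rc := by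
    intro e he h
    have := hδP e he h
    rw [hRcval]; linarith
  have hslc_lt : Rc - rc < ρ.sl u := by
    rw [hrcval, hRcval, hslu]; linarith
  have hslc_ne : ∀ v : V, Rc - rc ≠ ρ.sl v := by
    intro v h
    apply haaA
    refine Finset.mem_image.mpr ⟨ρ.sl v,
      Finset.mem_image_of_mem _ (Finset.mem_univ v), ?_⟩
    rw [hrcval, hRcval] at h
    rw [hslu]
    linarith
  have hrc_ne : ∀ e ∈ pts ρ, rc ≠ e := by
    intro e he
    rcases lt_trichotomy e (ρ.r u) with h | h | h
    · exact (hrc_gt e he h).ne'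
    · rw [← h] at hrp; exact hrp.ne
    · exact (hrp.trans h).ne
  have hRc_ne : ∀ e ∈ pts ρ, Rc ≠ e := by
    intro e he
    rcases lt_trichotomy e (ρ.R u) with h | h | h
    · exact (hRc_gt e he h).ne'
    · rw [← h] at hRP; exact hRP.ne
    · exact (hRP.trans h).ne
  -- the hypotheses of moveRep
  have hdistl : ∀ v, v ≠ c → lc ≠ ρ.l v ∧ lc ≠ ρ.r v ∧ rc ≠ ρ.l v ∧ rc ≠ ρ.r v := by
    intro v _
    exact ⟨(hlow _ (l_mem_pts ρ v)).1.ne, (hlow _ (r_mem_pts ρ v)).1.ne,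
      hrc_ne _ (l_mem_pts ρ v), hrc_ne _ (r_mem_pts ρ v)⟩
  have hdistu : ∀ v, v ≠ c → Lc ≠ ρ.L v ∧ Lc ≠ ρ.R v ∧ Rc ≠ ρ.L v ∧ Rc ≠ ρ.R v := by
    intro v _
    exact ⟨(hlow _ (L_mem_pts ρ v)).2.ne, (hlow _ (R_mem_pts ρ v)).2.ne,
      hRc_ne _ (L_mem_pts ρ v), hRc_ne _ (R_mem_pts ρ v)⟩
  have hdists : ∀ v, v ≠ c → Rc - rc ≠ ρ.R v - ρ.r v := fun v _ => hslc_ne v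
  have hkey1 : ∀ v, v ≠ u → v ≠ c →
      ¬(rc < ρ.l v ∧ Rc < ρ.L v) ∧ ¬(ρ.r v < lc ∧ ρ.R v < Lc) := by
    intro v hvu _
    constructor
    · rcases hpoke v hvu with h | h
      · rintro ⟨h1, _⟩
        exact absurd h1 (not_lt.mpr (hrc_gt _ (l_mem_pts ρ v) h).le)
      · rintro ⟨_, h2⟩
        exact absurd h2 (not_lt.mpr (hRc_gt _ (L_mem_pts ρ v) h).le)
    · rintro ⟨h1, _⟩
      exact absurd h1 (not_lt.mpr (hlow _ (r_mem_pts ρ v)).1.le)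
  have hkey2 : rc < ρ.l u ∧ Rc < ρ.L u := ⟨by rw [hlu]; exact hrp, by rw [hLu]; exact hRP⟩
  have hslope : ∀ x ∈ ρ.unb, Rc - rc < ρ.R x - ρ.r x := fun x hx =>
    lt_of_lt_of_le hslc_lt (hmin x hx)
  -- assemble
  let ρ' : ProjRep G := moveRep ρ u c lc rc Lc Rc hu hcu hnadj hgeom1 hgeom2 hdistl
    hdistu hdists hkey1 hkey2 hUNIV hslope
  have hunb' : ρ'.unb = ρ.unb \ {c} := rfl
  have hcoords : ∀ v, v ≠ c →
      ρ'.l v = ρ.l v ∧ ρ'.r v = ρ.r v ∧ ρ'.L v = ρ.L v ∧ ρ'.R v = ρ.R v := by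
    intro v hv
    have e1 : Function.update ρ.l c lc v = ρ.l v := Function.update_of_ne hv lc ρ.l
    have e2 : Function.update ρ.r c rc v = ρ.r v := Function.update_of_ne hv rc ρ.r
    have e3 : Function.update ρ.L c Lc v = ρ.L v := Function.update_of_ne hv Lc ρ.L
    have e4 : Function.update ρ.R c Rc v = ρ.R v := Function.update_of_ne hv Rc ρ.R
    exact ⟨e1, e2, e3, e4⟩
  have hllcu : ρ'.ll c u := by
    have ec1 : Function.update ρ.r c rc c = rc := Function.update_self c rc ρ.r
    have ec2 : Function.update ρ.R c Rc c = Rc := Function.update_self c Rc ρ.R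
    have eu1 : Function.update ρ.l c lc u = ρ.l u := Function.update_of_ne (Ne.symm hcu) lc ρ.l
    have eu2 : Function.update ρ.L c Lc u = ρ.L u := Function.update_of_ne (Ne.symm hcu) Lc ρ.L
    show Function.update ρ.r c rc c < Function.update ρ.l c lc u ∧
      Function.update ρ.R c Rc c < Function.update ρ.L c Lc u
    rw [ec1, ec2, eu1, eu2]
    exact hkey2
  exact ⟨ρ', meas_lt_of ρ ρ' u c hunb'
    (bad_subset_of ρ ρ' u c hunb' hcoords hllcu hUNIV) ⟨hu, hcu, hnadj, hic⟩⟩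

lemma stepDown (hfree : Gᶜ.CliqueFree 3) (ρ : ProjRep G) (hne : ρ.unb.Nonempty) :
    ∃ ρ' : ProjRep G, meas ρ' < meas ρ := by
  classical
  obtain ⟨u, hu, hmin⟩ := Set.exists_min_image ρ.unb ρ.sl (Set.toFinite _) hne
  by_cases hCI : ∀ v, v ≠ u → ¬ G.Adj u v → ¬ ρ.intersects u v
  · exact ρ.boundStep hu hCI
  · push_neg at hCI
    obtain ⟨c, hcu, hnadj, hint⟩ := hCI
    by_cases hR : ∀ v, ¬ ρ.ll u v
    · exact ρ.moveStep hfree hu hmin hcu hnadj hint hR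
    · push_neg at hR
      obtain ⟨v₀, hv₀⟩ := hR
      have hL : ∀ v, ¬ ρ.ll v u := by
        intro w hw
        have hwu : w ≠ u := by
          intro h; rw [h] at hw
          exact absurd hw.1 (not_lt.mpr (ρ.l_le_r u))
        have hv₀u : v₀ ≠ u := by
          intro h; rw [h] at hv₀
          exact absurd hv₀.1 (not_lt.mpr (ρ.l_le_r u))
        have hwv : ρ.ll w v₀ :=
          ⟨lt_trans (lt_of_lt_of_le hw.1 (ρ.l_le_r u)) hv₀.1,
           lt_trans (lt_of_lt_of_le hw.2 (ρ.L_le_R u)) hv₀.2⟩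
        have hwv₀ : w ≠ v₀ := by
          intro h; rw [h] at hwv
          exact absurd hwv.1 (not_lt.mpr (ρ.l_le_r v₀))
        exact indep_triple hfree hwu hwv₀ (Ne.symm hv₀u) (ρ.not_adj_of_ll hw)
          (ρ.not_adj_of_ll hwv) (ρ.not_adj_of_ll hv₀)
      have hmin' : ∀ w ∈ (ρ.rotate).unb, (ρ.rotate).sl u ≤ (ρ.rotate).sl w := by
        intro w hw
        rw [sl_rotate, sl_rotate]
        exact hmin w hw
      have hint' : (ρ.rotate).intersects u c := (intersects_rotate ρ u c).mpr hint
      have hCR' : ∀ v, ¬ (ρ.rotate).ll u v := by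
        intro v
        rw [ll_rotate]
        exact hL v
      obtain ⟨ρ', h'⟩ := (ρ.rotate).moveStep hfree hu hmin' hcu hnadj hint' hCR'
      exact ⟨ρ', by rwa [meas_rotate] at h'⟩

lemma exists_empty_unb (hfree : Gᶜ.CliqueFree 3) :
    ∀ n : ℕ, ∀ ρ : ProjRep G, meas ρ ≤ n → ∃ ρ' : ProjRep G, ρ'.unb = ∅ := by
  intro n
  induction n with
  | zero =>
    intro ρ h
    have h0 : ρ.unb.ncard = 0 := by unfold meas at h; omega
    exact ⟨ρ, (Set.ncard_eq_zero (Set.toFinite _)).mp h0⟩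
  | succ n ih =>
    intro ρ h
    by_cases hne : ρ.unb = ∅
    · exact ⟨ρ, hne⟩
    · obtain ⟨ρ', h'⟩ := stepDown hfree ρ (Set.nonempty_iff_ne_empty.mpr hne)
      exact ih ρ' (by omega)

end Steps

end ProjRep

/-- Let `G` be a tolerance graph which is also a cocomparability graph, and
suppose that the complement of `G` is triangle-free (equivalently, `G` contains no three
distinct pairwise non-adjacent vertices).  Then `G` is a bounded tolerance graph, i.e.
`G` admits a projection representation with no unbounded vertices. -/
theorem complement_triangle_free {V : Type*} [Fintype V] (G : SimpleGraph V)
    (htol : Nonempty (ProjRep G)) (hco : IsCocomparability G)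
    (hfree : Gᶜ.CliqueFree 3) :
    ∃ ρs : ProjRep G, ρs.unb = ∅ := by
  obtain ⟨ρ⟩ := htol
  exact ProjRep.exists_empty_unb hfree (ProjRep.meas ρ) ρ le_rfl
end

section
/- Let G be a minimum counterexample, R a canonical projection representation of G, and u an unbounded vertex of R. Then for every v ∈ Q_u, every covering vertex of u is also a covering vertex of v; moreover, Q_u ∩ V_0(u) = ∅. -/
variable {V : Type*}

private lemma isolated_reach {W : Type*} {H : SimpleGraph W} {a b : W}
    (h : H.Reachable a b) (ha : ∀ z, ¬ H.Adj a z) : a = b := by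
  obtain ⟨w⟩ := h
  cases w with
  | nil => rfl
  | cons h' _ => exact absurd h' (ha _)

/-- Let `G` be a minimum counterexample, `R` a canonical projection
representation of `G`, and `u` an unbounded vertex of `R`.  Then for every `v ∈ Q_u`,
every covering vertex of `u` is also a covering vertex of `v`; moreover
`Q_u ∩ V_0(u) = ∅`. -/
theorem Qu_lemma {V : Type*} [Fintype V] (G : SimpleGraph V)
    (hG : MinCounterexample G) (ρ : ProjRep G) (hcan : IsCanonical ρ)
    (u : V) (hu : u ∈ ρ.unb) :
    (∀ v ∈ Qset ρ u, ∀ c : V, IsCoveringVertex G u c → IsCoveringVertex G v c) ∧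
      Qset ρ u ∩ V0 G u = ∅ := by
  have key : ∀ v ∈ Qset ρ u, ∀ c : V, IsCoveringVertex G u c → IsCoveringVertex G v c := by
    rintro v ⟨hvunb, hvsub⟩ c ⟨hcu, hcnadj, hccov⟩
    have hsub : G.neighborSet v ⊆ G.neighborSet u := hvsub.1
    refine ⟨?_, ?_, ?_⟩
    · rintro rfl
      exact hvsub.2 (fun w hw => hccov w hw)
    · intro hadj
      exact hcnadj ((G.mem_neighborSet u c).mp (hsub ((G.mem_neighborSet v c).mpr hadj)))
    · intro w hw
      exact hccov w (hsub hw)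
  refine ⟨key, ?_⟩
  ext v
  simp only [Set.mem_inter_iff, Set.mem_empty_iff_false, iff_false]
  rintro ⟨hvQ, hv0⟩
  obtain ⟨hvout, c, hcout, hccov, hreach⟩ := hv0
  have hsub : G.neighborSet v ⊆ G.neighborSet u := hvQ.2.1
  have hiso : ∀ z, ¬ (G.induce (outside G u)).Adj ⟨v, hvout⟩ z := by
    rintro ⟨z, hzout⟩ hadj
    have : G.Adj v z := hadj
    exact hzout.2 (hsub this)
  have := isolated_reach hreach hiso
  have hvc : v = c := congrArg Subtype.val this
  subst hvc
  exact hvQ.2.2 (fun w hw => hccov w hw)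
end
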